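/- arXiv:2510.19337 — 10 statements merged into one kernel-verified Lean document; each statement's English description precedes it below -/
import Mathlib

section
/- Let (X,d) be a metric space. Then (X,d) has at least one isolated point if and only if the hyperspace (K(X), d_H) of nonempty compact subsets of X with the Hausdorff metric has at least one isolated point. -/
open Metric TopologicalSpace

/-- A metric space has an isolated point iff its hyperspace of nonempty compact
subsets (with the Hausdorff metric) has an isolated point. -/
theorem exists_isolated_point_iff_hyperspace {X : Type*} [MetricSpace X] :
    (∃ x : X, IsOpen ({x} : Set X)) ↔
      (∃ K : TopologicalSpace.NonemptyCompacts X,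
        IsOpen ({K} : Set (TopologicalSpace.NonemptyCompacts X))) := by
  constructor
  · rintro ⟨x, hx⟩
    rw [Metric.isOpen_singleton_iff] at hx
    obtain ⟨ε, εpos, hε⟩ := hx
    refine ⟨⟨⟨{x}, isCompact_singleton⟩, ⟨x, rfl⟩⟩, ?_⟩
    rw [Metric.isOpen_singleton_iff]
    refine ⟨ε, εpos, fun L hL => ?_⟩
    have hne : EMetric.hausdorffEdist (L : Set X) ({x} : Set X) ≠ ⊤ :=
      Metric.hausdorffEdist_ne_top_of_nonempty_of_bounded L.nonempty ⟨x, rfl⟩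
        L.isCompact.isBounded Bornology.isBounded_singleton
    rw [NonemptyCompacts.dist_eq] at hL
    have hsub : (L : Set X) ⊆ {x} := by
      intro z hz
      have h1 : infDist z ({x} : Set X) ≤ hausdorffDist (L : Set X) {x} :=
        infDist_le_hausdorffDist_of_mem hz hne
      rw [Metric.infDist_singleton] at h1
      exact hε z (lt_of_le_of_lt h1 hL)
    apply TopologicalSpace.NonemptyCompacts.ext
    exact Set.Subset.antisymm hsub (by rintro z rfl; obtain ⟨w, hw⟩ := L.nonempty
                                       have := hsub hw; rw [this] at hw; exact hw)
  · rintro ⟨K, hK⟩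
    rw [Metric.isOpen_singleton_iff] at hK
    obtain ⟨ε, εpos, hε⟩ := hK
    by_contra h
    push_neg at h
    obtain ⟨x, hxK⟩ := K.nonempty
    have hx := h x
    rw [Metric.isOpen_singleton_iff] at hx
    push_neg at hx
    obtain ⟨y, hyx, hyne⟩ := hx (ε/2) (by linarith)
    set δ := dist x y with hδ
    have δpos : 0 < δ := dist_pos.2 (Ne.symm hyne)
    have δlt : δ < ε/2 := by rw [hδ, dist_comm]; exact hyx
    -- the perturbed set
    set S : Set X := (K \ ball x δ) ∪ {y} with hS
    have hScompact : IsCompact S :=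
      (K.isCompact.inter_right isOpen_ball.isClosed_compl).union isCompact_singleton
    have hSne : S.Nonempty := ⟨y, Or.inr rfl⟩
    set L : NonemptyCompacts X := ⟨⟨S, hScompact⟩, hSne⟩ with hL
    have hedist : EMetric.hausdorffEdist (L : Set X) (K : Set X) ≠ ⊤ :=
      Metric.hausdorffEdist_ne_top_of_nonempty_of_bounded hSne K.nonempty
        hScompact.isBounded K.isCompact.isBounded
    have hdist : dist L K < ε := by
      rw [NonemptyCompacts.dist_eq]
      have hle : hausdorffDist (L : Set X) (K : Set X) ≤ 2 * δ := by
        apply hausdorffDist_le_of_infDist (by linarith)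
        · rintro z (⟨hz, -⟩ | rfl)
          · exact le_trans (infDist_le_dist_of_mem hz) (by simp; positivity)
          · exact le_trans (le_trans (infDist_le_dist_of_mem hxK) (by rw [dist_comm]))
              (by linarith)
        · intro w hw
          by_cases hwb : w ∈ ball x δ
          · have hyL : y ∈ S := Or.inr rfl
            have : dist w y ≤ dist w x + dist x y := dist_triangle w x y
            have : dist w y ≤ 2 * δ := by
              have := mem_ball.1 hwb
              linarith [dist_triangle w x y]
            exact le_trans (infDist_le_dist_of_mem hyL) this
          · exact le_trans (infDist_le_dist_of_mem (Or.inl ⟨hw, hwb⟩)) (by simp; positivity)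
      linarith
    have hLK : L = K := hε L hdist
    have hxS : x ∉ S := by
      rintro (⟨-, hb⟩ | rfl)
      · exact hb (mem_ball_self δpos)
      · exact hyne rfl
    apply hxS
    show x ∈ (L : Set X)
    rw [hLK]
    exact hxK
end

section
/- Let (X,d) be a metric space and f : X → X a continuous map. The following statements are equivalent: (i) (X,f) is chain recurrent; (ii) for every N ≥ 1 the N-fold product system (X^N, f_(N)) is chain recurrent; (iii) the hyperspace system (K(X), f̄) is chain recurrent. -/
open Metric TopologicalSpace Set

/-- The induced map `f̄` on the hyperspace of nonempty compact subsets,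
`f̄(K) = f(K)`. -/
def barMap {X : Type*} [MetricSpace X] (f : X → X) (hf : Continuous f)
    (K : TopologicalSpace.NonemptyCompacts X) : TopologicalSpace.NonemptyCompacts X :=
  ⟨⟨f '' (K : Set X), K.isCompact.image hf⟩, K.nonempty.image f⟩

/-- `(c j)_{j=0}^n` is a δ-chain for `g`:  `dist (g (c j)) (c (j+1)) < δ` for `j < n`. -/
def IsDeltaChain {Y : Type*} [MetricSpace Y] (g : Y → Y) (δ : ℝ) (n : ℕ) (c : ℕ → Y) : Prop :=
  ∀ j < n, dist (g (c j)) (c (j + 1)) < δ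

/-- The system `(Y, g)` is chain recurrent. -/
def ChainRecurrent {Y : Type*} [MetricSpace Y] (g : Y → Y) : Prop :=
  ∀ x : Y, ∀ δ : ℝ, 0 < δ →
    ∃ n : ℕ, 1 ≤ n ∧ ∃ c : ℕ → Y, c 0 = x ∧ c n = x ∧ IsDeltaChain g δ n c

/-- The `N`-fold product map `g_(N)` acting on `Fin N → Y`
(the Pi metric on `Fin N → Y` is the sup metric `d_(N)`). -/
def prodMap {Y : Type*} (g : Y → Y) (N : ℕ) : (Fin N → Y) → (Fin N → Y) :=
  fun x i => g (x i)

/-- A periodic chain stays a chain at every index, modulo the period. -/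
lemma periodic_chain_step {X : Type*} [MetricSpace X] (f : X → X) {δ : ℝ} {n : ℕ}
    (hn : 1 ≤ n) {c : ℕ → X} (hcn : c n = c 0) (hc : IsDeltaChain f δ n c) (j : ℕ) :
    dist (f (c (j % n))) (c ((j + 1) % n)) < δ := by
  have hn0 : 0 < n := hn
  have hr : j % n < n := Nat.mod_lt _ hn0
  have hkey : (j + 1) % n = (j % n + 1) % n := (Nat.mod_add_mod j n 1).symm
  rcases eq_or_lt_of_le (Nat.succ_le_of_lt hr) with h | h
  · have hjn : j % n + 1 = n := h
    have h0 : (j + 1) % n = 0 := by rw [hkey, hjn, Nat.mod_self]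
    have hstep := hc (j % n) hr
    rw [hjn, hcn] at hstep
    rwa [h0]
  · have h1 : (j + 1) % n = j % n + 1 := by rw [hkey, Nat.mod_eq_of_lt h]
    rw [h1]
    exact hc (j % n) hr

lemma cr_to_prod {X : Type*} [MetricSpace X] {f : X → X} (h : ChainRecurrent f) :
    ∀ N : ℕ, 1 ≤ N → ChainRecurrent (prodMap f N) := by
  intro N _ x δ hδ
  choose n hn c hc0 hcn hc using fun i : Fin N => h (x i) δ hδ
  refine ⟨∏ i : Fin N, n i, Finset.one_le_prod' (fun i _ => hn i),
    fun j i => c i (j % n i), ?_, ?_, ?_⟩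
  · funext i; simp [hc0 i]
  · funext i
    have hdvd : n i ∣ ∏ i : Fin N, n i := Finset.dvd_prod_of_mem n (Finset.mem_univ i)
    show c i ((∏ i : Fin N, n i) % n i) = x i
    rw [Nat.mod_eq_zero_of_dvd hdvd, hc0 i]
  · intro j _
    rw [dist_pi_lt_iff hδ]
    intro i
    have hcni : c i (n i) = c i 0 := by rw [hcn i, hc0 i]
    exact periodic_chain_step f (hn i) hcni (hc i) j

lemma prod_to_cr {X : Type*} [MetricSpace X] {f : X → X}
    (h : ∀ N : ℕ, 1 ≤ N → ChainRecurrent (prodMap f N)) : ChainRecurrent f := by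
  intro x δ hδ
  obtain ⟨n, hn, c, hc0, hcn, hc⟩ := h 1 le_rfl (fun _ => x) δ hδ
  refine ⟨n, hn, fun j => c j 0, congrFun hc0 0, congrFun hcn 0, fun j hj => ?_⟩
  calc dist (f (c j 0)) (c (j + 1) 0) = dist (prodMap f 1 (c j) 0) (c (j + 1) 0) := rfl
    _ ≤ dist (prodMap f 1 (c j)) (c (j + 1)) := dist_le_pi_dist _ _ 0
    _ < δ := hc j hj

lemma cr_to_hyper {X : Type*} [MetricSpace X] {f : X → X} (hf : Continuous f)
    (h : ChainRecurrent f) : ChainRecurrent (barMap f hf) := by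
  intro K δ hδ
  have hδ4 : 0 < δ / 4 := by linarith
  -- uniform continuity on K
  obtain ⟨ε, hε, hunif⟩ := Metric.uniformContinuousOn_iff.mp
    (K.isCompact.uniformContinuousOn_of_continuous hf.continuousOn) (δ / 4) hδ4
  set ε' : ℝ := min ε (δ / 4) with hε'def
  have hε' : 0 < ε' := lt_min hε hδ4
  -- finite ε'-net of K with centers in K
  obtain ⟨t, htK, htfin, htcov⟩ := K.isCompact.finite_cover_balls hε'
  have hcov : ∀ y ∈ (K : Set X), ∃ z ∈ t, dist y z < ε' := by
    intro y hy
    obtain ⟨z, hz⟩ := Set.mem_iUnion₂.mp (htcov hy)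
    exact ⟨z, hz.1, hz.2⟩
  -- chains at every point
  choose n hn c hc0 hcn hc using fun z : X => h z (δ / 4) hδ4
  have hper : ∀ z : X, ∀ j : ℕ, dist (f (c z (j % n z))) (c z ((j + 1) % n z)) < δ / 4 := by
    intro z j
    have : c z (n z) = c z 0 := by rw [hcn z, hc0 z]
    exact periodic_chain_step f (hn z) this (hc z) j
  set M : ℕ := 2 * ∏ z ∈ htfin.toFinset, n z with hMdef
  have hM2 : 2 ≤ M := by
    have : 1 ≤ ∏ z ∈ htfin.toFinset, n z := Finset.one_le_prod' (fun z _ => hn z)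
    calc 2 = 2 * 1 := by ring
      _ ≤ M := by exact Nat.mul_le_mul_left 2 this
  have hMdvd : ∀ z ∈ t, n z ∣ M := by
    intro z hz
    exact Dvd.dvd.mul_left (Finset.dvd_prod_of_mem n (htfin.mem_toFinset.mpr hz)) 2
  have hczM : ∀ z ∈ t, c z (M % n z) = z := by
    intro z hz
    rw [Nat.mod_eq_zero_of_dvd (hMdvd z hz), hc0 z]
  have hcz0 : ∀ z : X, c z (0 % n z) = z := by
    intro z; rw [Nat.zero_mod, hc0 z]
  -- nonemptiness of the net
  have htne : t.Nonempty := by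
    obtain ⟨y, hy⟩ := K.nonempty
    obtain ⟨z, hz, _⟩ := hcov y hy
    exact ⟨z, hz⟩
  -- the finite sets along the chain
  set F : ℕ → TopologicalSpace.NonemptyCompacts X := fun j =>
    ⟨⟨(fun z => c z (j % n z)) '' t, (htfin.image _).isCompact⟩, htne.image _⟩ with hFdef
  set C : ℕ → TopologicalSpace.NonemptyCompacts X := fun j =>
    if j = 0 ∨ j = M then K else F j with hCdef
  have hC0 : C 0 = K := by simp [hCdef]
  have hCM : C M = K := by simp [hCdef]
  have hCmid : ∀ j, j ≠ 0 → j ≠ M → C j = F j := by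
    intro j h1 h2; simp [hCdef, h1, h2]
  refine ⟨M, le_trans one_le_two hM2, C, hC0, hCM, fun j hj => ?_⟩
  rw [Metric.NonemptyCompacts.dist_eq]
  have hbar : ∀ A : TopologicalSpace.NonemptyCompacts X,
      ((barMap f hf A : Set X)) = f '' (A : Set X) := fun A => rfl
  have hFcoe : ∀ j : ℕ, ((F j : Set X)) = (fun z => c z (j % n z)) '' t := fun j => rfl
  have hhalf : (0:ℝ) ≤ δ / 2 := by linarith
  have goal_le : hausdorffDist ((barMap f hf (C j) : Set X)) ((C (j+1) : Set X)) ≤ δ / 2 := by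
    rcases eq_or_ne j 0 with rfl | hj0
    · -- first step : f '' K  vs  F 1
      have h1M : (1:ℕ) ≠ M := by omega
      rw [hC0, hCmid 1 one_ne_zero h1M, hbar, hFcoe]
      apply hausdorffDist_le_of_mem_dist hhalf
      · rintro p ⟨y, hy, rfl⟩
        obtain ⟨z, hz, hyz⟩ := hcov y hy
        refine ⟨c z (1 % n z), Set.mem_image_of_mem _ hz, ?_⟩
        have h1 : dist (f y) (f z) < δ / 4 :=
          hunif y hy z (htK hz) (lt_of_lt_of_le hyz (min_le_left _ _))
        have h2 : dist (f z) (c z (1 % n z)) < δ / 4 := by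
          have := hper z 0
          rwa [hcz0 z] at this
        calc dist (f y) (c z (1 % n z)) ≤ dist (f y) (f z) + dist (f z) (c z (1 % n z)) :=
              dist_triangle _ _ _
          _ ≤ δ / 2 := by linarith
      · rintro q ⟨z, hz, rfl⟩
        refine ⟨f z, Set.mem_image_of_mem f (htK hz), ?_⟩
        have h2 : dist (f z) (c z (1 % n z)) < δ / 4 := by
          have := hper z 0
          rwa [hcz0 z] at this
        show dist (c z (1 % n z)) (f z) ≤ δ / 2
        rw [dist_comm]; linarith
    · rcases eq_or_ne (j + 1) M with hjM | hjM
      · -- last step : f '' F j  vs  K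
        have hjne : j ≠ M := by omega
        rw [hCmid j hj0 hjne, hjM, hCM, hbar, hFcoe]
        apply hausdorffDist_le_of_mem_dist hhalf
        · rintro p ⟨q, ⟨z, hz, rfl⟩, rfl⟩
          refine ⟨z, htK hz, ?_⟩
          have := hper z j
          rw [hjM, hczM z hz] at this
          linarith
        · intro y hy
          obtain ⟨z, hz, hyz⟩ := hcov y hy
          refine ⟨f (c z (j % n z)), Set.mem_image_of_mem f (Set.mem_image_of_mem _ hz), ?_⟩
          have h2 := hper z j
          rw [hjM, hczM z hz] at h2
          have h1 : dist y z < δ / 4 := lt_of_lt_of_le hyz (min_le_right _ _)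
          calc dist y (f (c z (j % n z))) ≤ dist y z + dist z (f (c z (j % n z))) :=
                dist_triangle _ _ _
            _ ≤ δ / 2 := by rw [dist_comm z]; linarith
      · -- middle step : f '' F j  vs  F (j+1)
        have hjne : j ≠ M := by omega
        have hj1 : j + 1 ≠ 0 := by omega
        rw [hCmid j hj0 hjne, hCmid (j+1) hj1 hjM, hbar, hFcoe, hFcoe]
        apply hausdorffDist_le_of_mem_dist hhalf
        · rintro p ⟨q, ⟨z, hz, rfl⟩, rfl⟩
          refine ⟨c z ((j+1) % n z), Set.mem_image_of_mem _ hz, ?_⟩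
          show dist (f (c z (j % n z))) (c z ((j+1) % n z)) ≤ δ / 2
          linarith [hper z j]
        · rintro q ⟨z, hz, rfl⟩
          refine ⟨f (c z (j % n z)), Set.mem_image_of_mem f (Set.mem_image_of_mem _ hz), ?_⟩
          show dist (c z ((j+1) % n z)) (f (c z (j % n z))) ≤ δ / 2
          rw [dist_comm]; linarith [hper z j]
  linarith

lemma hyper_to_cr {X : Type*} [MetricSpace X] {f : X → X} (hf : Continuous f)
    (h : ChainRecurrent (barMap f hf)) : ChainRecurrent f := by
  intro x δ hδ
  set K0 : TopologicalSpace.NonemptyCompacts X :=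
    ⟨⟨{x}, isCompact_singleton⟩, Set.singleton_nonempty x⟩ with hK0
  obtain ⟨n, hn, C, hC0, hCn, hC⟩ := h K0 δ hδ
  have key : ∀ k, k ≤ n → ∃ c : ℕ → X, c (n - k) ∈ (C (n - k) : Set X) ∧ c n = x ∧
      ∀ j, n - k ≤ j → j < n → dist (f (c j)) (c (j + 1)) < δ := by
    intro k
    induction k with
    | zero =>
      intro _
      refine ⟨fun _ => x, ?_, rfl, fun j hj hj' => absurd hj (by omega)⟩
      rw [Nat.sub_zero, hCn]
      exact rfl
    | succ k ih =>
      intro hk1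
      obtain ⟨c, hmem, hend, hsteps⟩ := ih (le_of_lt hk1)
      set m : ℕ := n - (k + 1) with hm
      have hm1 : m + 1 = n - k := by omega
      have hmn : m < n := by omega
      have hchain := hC m hmn
      rw [Metric.NonemptyCompacts.dist_eq] at hchain
      have hmem' : c (m + 1) ∈ ((C (m + 1) : Set X)) := by rw [hm1]; exact hmem
      have hfin : EMetric.hausdorffEdist ((barMap f hf (C m) : Set X)) ((C (m+1) : Set X)) ≠ ⊤ :=
        hausdorffEdist_ne_top_of_nonempty_of_bounded (barMap f hf (C m)).nonempty
          (C (m+1)).nonempty (barMap f hf (C m)).isCompact.isBounded (C (m+1)).isCompact.isBounded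
      obtain ⟨p, hp, hpd⟩ := exists_dist_lt_of_hausdorffDist_lt' hmem' hchain hfin
      obtain ⟨w, hw, rfl⟩ := hp
      refine ⟨Function.update c m w, ?_, ?_, ?_⟩
      · rw [Function.update_self]; exact hw
      · rw [Function.update_of_ne (by omega : n ≠ m)]; exact hend
      · intro j hj hj'
        rcases eq_or_ne j m with rfl | hjm
        · rw [Function.update_self, Function.update_of_ne (by omega : m + 1 ≠ m)]
          exact hpd
        · rw [Function.update_of_ne hjm, Function.update_of_ne (by omega : j + 1 ≠ m)]
          exact hsteps j (by omega) hj'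
  obtain ⟨c, hmem, hend, hsteps⟩ := key n le_rfl
  rw [Nat.sub_self, hC0] at hmem
  have hc0 : c 0 = x := hmem
  exact ⟨n, hn, c, hc0, hend, fun j hj => hsteps j (by omega) hj⟩

/-- Chain recurrence of `(X,f)`, of all finite products `(X^N, f_(N))`, and of the
hyperspace system `(K(X), f̄)` are equivalent. -/
theorem chainRecurrent_iff_prod_iff_hyperspace {X : Type*} [MetricSpace X]
    (f : X → X) (hf : Continuous f) :
    (ChainRecurrent f ↔ ∀ N : ℕ, 1 ≤ N → ChainRecurrent (prodMap f N)) ∧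
    (ChainRecurrent f ↔ ChainRecurrent (barMap f hf)) := by
  exact ⟨⟨cr_to_prod, prod_to_cr⟩, ⟨cr_to_hyper hf, hyper_to_cr hf⟩⟩
end

section
/- Let (X,d) be a metric space and f : X → X a continuous map. The following statements are equivalent: (i) (X,f) is chain weakly-mixing; (ii) for every N ≥ 1 the N-fold product system (X^N, f_(N)) is chain transitive; (iii) the hyperspace system (K(X), f̄) is chain transitive. -/
/-- The system `(Y, g)` is chain transitive. -/
def ChainTransitive {Y : Type*} [MetricSpace Y] (g : Y → Y) : Prop :=
  ∀ x y : Y, ∀ δ : ℝ, 0 < δ →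
    ∃ n : ℕ, 1 ≤ n ∧ ∃ c : ℕ → Y, c 0 = x ∧ c n = y ∧ IsDeltaChain g δ n c

namespace CWMAux

open Metric Set TopologicalSpace

variable {Y : Type*} [MetricSpace Y]

/-- There is a δ-chain of length `n` from `x` to `y`. -/
def HasChain (g : Y → Y) (δ : ℝ) (n : ℕ) (x y : Y) : Prop :=
  ∃ c : ℕ → Y, c 0 = x ∧ c n = y ∧ IsDeltaChain g δ n c

lemma hasChain_zero (g : Y → Y) (δ : ℝ) (x : Y) : HasChain g δ 0 x x :=
  ⟨fun _ => x, rfl, rfl, fun j hj => by omega⟩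

lemma HasChain.concat {g : Y → Y} {δ : ℝ} {n m : ℕ} {x y z : Y}
    (h1 : HasChain g δ n x y) (h2 : HasChain g δ m y z) : HasChain g δ (n + m) x z := by
  obtain ⟨c, hc0, hcn, hc⟩ := h1
  obtain ⟨e, he0, hem, he⟩ := h2
  refine ⟨fun j => if j ≤ n then c j else e (j - n), by simp [hc0], ?_, ?_⟩
  · rcases Nat.eq_zero_or_pos m with hm | hm
    · subst hm; simp only [Nat.add_zero, if_pos (le_refl n), hcn]; rw [← he0, hem]
    · have : ¬ (n + m ≤ n) := by omega
      simp only [this, if_false]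
      simpa using hem
  · intro j hj
    rcases lt_trichotomy j n with h | h | h
    · have h1' : j ≤ n := h.le
      have h2' : j + 1 ≤ n := h
      simp only [h1', h2', if_true]
      exact hc j h
    · subst h
      have hm : 0 < m := by omega
      have : ¬ (j + 1 ≤ j) := by omega
      simp only [le_refl, if_true, this, if_false]
      have := he 0 hm
      simpa [hcn, he0] using this
    · have h1' : ¬ (j ≤ n) := by omega
      have h2' : ¬ (j + 1 ≤ n) := by omega
      simp only [h1', h2', if_false]
      have : j + 1 - n = (j - n) + 1 := by omega
      rw [this]
      exact he (j - n) (by omega)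
lemma HasChain.prepend {g : Y → Y} {δ : ℝ} {n : ℕ} {x y z : Y}
    (hd : dist (g x) y < δ) (h : HasChain g δ n y z) : HasChain g δ (n + 1) x z := by
  obtain ⟨c, hc0, hcn, hc⟩ := h
  refine ⟨fun j => if j = 0 then x else c (j - 1), by simp, by simp [hcn], ?_⟩
  intro j hj
  rcases Nat.eq_zero_or_pos j with h | h
  · subst h; simpa [hc0] using hd
  · have : ¬ (j = 0) := by omega
    have h2 : ¬ (j + 1 = 0) := by omega
    simp only [this, h2, if_false]
    have : j + 1 - 1 = (j - 1) + 1 := by omega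
    rw [this]
    exact hc (j - 1) (by omega)

lemma HasChain.nsmul {g : Y → Y} {δ : ℝ} {p : ℕ} {y : Y}
    (h : HasChain g δ p y y) : ∀ a : ℕ, HasChain g δ (a * p) y y := by
  intro a
  induction a with
  | zero => simpa using hasChain_zero g δ y
  | succ a ih =>
    have := ih.concat h
    simpa [Nat.succ_mul] using this

end CWMAux

namespace CWMAux

open Metric Set TopologicalSpace

section Main
variable {X : Type*} [MetricSpace X] (f : X → X)

/-- From chain transitivity of the product, δ-chains of two consecutive lengths. -/
lemma exists_consecutive_chains
    (hP2 : ChainTransitive (fun p : X × X => (f p.1, f p.2))) (x y : X) {δ : ℝ} (hδ : 0 < δ) :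
    ∃ n : ℕ, 1 ≤ n ∧ HasChain f δ n x y ∧ HasChain f δ (n + 1) x y := by
  obtain ⟨n, hn1, c, hc0, hcn, hc⟩ := hP2 (x, f x) (y, y) δ hδ
  have key : ∀ j < n, dist (f (c j).1) (c (j+1)).1 < δ ∧ dist (f (c j).2) (c (j+1)).2 < δ := by
    intro j hj
    have := hc j hj
    rw [Prod.dist_eq] at this
    exact ⟨lt_of_le_of_lt (le_max_left _ _) this, lt_of_le_of_lt (le_max_right _ _) this⟩
  have h1 : HasChain f δ n x y :=
    ⟨fun j => (c j).1, by simp [hc0], by simp [hcn], fun j hj => (key j hj).1⟩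
  have h2 : HasChain f δ n (f x) y :=
    ⟨fun j => (c j).2, by simp [hc0], by simp [hcn], fun j hj => (key j hj).2⟩
  exact ⟨n, hn1, h1, h2.prepend (by simpa using hδ)⟩

/-- Chain mixing: all sufficiently long chain lengths are realized. -/
lemma chain_mixing
    (hP2 : ChainTransitive (fun p : X × X => (f p.1, f p.2))) (x y : X) {δ : ℝ} (hδ : 0 < δ) :
    ∃ M : ℕ, ∀ m ≥ M, HasChain f δ m x y := by
  obtain ⟨n, hn1, hxy, _⟩ := exists_consecutive_chains f hP2 x y hδ
  obtain ⟨p, hp1, hyp, hyp1⟩ := exists_consecutive_chains f hP2 y y hδ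
  refine ⟨n + p * p, fun m hm => ?_⟩
  set s := m - n with hs
  have hsm : m = n + s := by omega
  have hspp : p * p ≤ s := by omega
  set q := s / p with hq
  set r := s % p with hr
  have hrp : r < p := Nat.mod_lt _ (by omega)
  have hqs : p * q + r = s := Nat.div_add_mod s p
  have hpq : p ≤ q := by
    rw [hq, Nat.le_div_iff_mul_le (by omega)]
    nlinarith
  have hdecomp : m = n + (q - r) * p + r * (p + 1) := by
    have : (q - r) * p + r * (p + 1) = q * p + r := by
      have h1 : r ≤ q := by omega
      calc (q - r) * p + r * (p + 1) = (q - r) * p + r * p + r := by ring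
        _ = ((q - r) + r) * p + r := by ring
        _ = q * p + r := by rw [Nat.sub_add_cancel h1]
    have hqs' : q * p + r = s := by rw [mul_comm] at hqs; exact hqs
    omega
  rw [hdecomp]
  exact (hxy.concat (hyp.nsmul (q - r))).concat (hyp1.nsmul r)

/-- Assemble coordinatewise chains of a common length into a product chain. -/
lemma pi_chain {N : ℕ} {δ : ℝ} (hδ : 0 < δ) {L : ℕ} {x y : Fin N → X}
    (h : ∀ i, HasChain f δ L (x i) (y i)) : HasChain (prodMap f N) δ L x y := by
  choose c h0 hL hch using h
  refine ⟨fun j i => c i j, funext h0, funext hL, ?_⟩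
  intro j hj
  rw [dist_pi_lt_iff hδ]
  intro i
  exact hch i j hj

lemma prod_of_P2 (hP2 : ChainTransitive (fun p : X × X => (f p.1, f p.2))) :
    ∀ N : ℕ, 1 ≤ N → ChainTransitive (prodMap f N) := by
  intro N _ x y δ hδ
  have h := fun i : Fin N => chain_mixing f hP2 (x i) (y i) hδ
  choose M hM using h
  set L := max 1 (Finset.univ.sup M) with hL
  have hchain : ∀ i, HasChain f δ L (x i) (y i) := fun i =>
    hM i L (le_trans (Finset.le_sup (Finset.mem_univ i)) (le_max_right _ _))
  obtain ⟨c, h0, hn, hch⟩ := pi_chain f hδ hchain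
  exact ⟨L, le_max_left _ _, c, h0, hn, hch⟩

lemma P2_of_prod (h : ChainTransitive (prodMap f 2)) :
    ChainTransitive (fun p : X × X => (f p.1, f p.2)) := by
  intro x y δ hδ
  obtain ⟨n, hn1, c, hc0, hcn, hc⟩ := h ![x.1, x.2] ![y.1, y.2] δ hδ
  refine ⟨n, hn1, fun j => (c j 0, c j 1), ?_, ?_, ?_⟩
  · show (c 0 0, c 0 1) = x; rw [hc0]; simp
  · show (c n 0, c n 1) = y; rw [hcn]; simp
  · intro j hj
    have := hc j hj
    rw [Prod.dist_eq, max_lt_iff]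
    constructor
    · exact lt_of_le_of_lt (dist_le_pi_dist (prodMap f 2 (c j)) (c (j+1)) 0) this
    · exact lt_of_le_of_lt (dist_le_pi_dist (prodMap f 2 (c j)) (c (j+1)) 1) this

end Main
end CWMAux

namespace CWMAux
open Metric Set TopologicalSpace

section Hyper
variable {X : Type*} [MetricSpace X] (f : X → X) (hf : Continuous f)

/-- The nonempty compact set given by the range of a tuple. -/
def tupleNC {N : ℕ} [Nonempty (Fin N)] (c : Fin N → X) : NonemptyCompacts X :=
  ⟨⟨Set.range c, (Set.finite_range c).isCompact⟩, Set.range_nonempty c⟩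

lemma coe_tupleNC {N : ℕ} [Nonempty (Fin N)] (c : Fin N → X) :
    (tupleNC c : Set X) = Set.range c := rfl

lemma barMap_tupleNC {N : ℕ} [Nonempty (Fin N)] (c : Fin N → X) :
    barMap f hf (tupleNC c) = tupleNC (prodMap f N c) := by
  apply NonemptyCompacts.ext
  show f '' Set.range c = Set.range (prodMap f N c)
  exact (Set.range_comp f c).symm

lemma tuple_dist_le {N : ℕ} [Nonempty (Fin N)] {u v : Fin N → X} {r : ℝ} (hr : 0 ≤ r)
    (h : ∀ i, dist (u i) (v i) ≤ r) : dist (tupleNC u) (tupleNC v) ≤ r := by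
  rw [NonemptyCompacts.dist_eq]
  apply hausdorffDist_le_of_mem_dist hr
  · rintro x ⟨i, rfl⟩; exact ⟨v i, ⟨i, rfl⟩, h i⟩
  · rintro x ⟨i, rfl⟩; exact ⟨u i, ⟨i, rfl⟩, by rw [dist_comm]; exact h i⟩

lemma ex_fwd {A B : NonemptyCompacts X} {δ : ℝ} (h : dist (barMap f hf A) B < δ)
    {u : X} (hu : u ∈ (A : Set X)) : ∃ v ∈ (B : Set X), dist (f u) v < δ := by
  rw [NonemptyCompacts.dist_eq] at h
  exact exists_dist_lt_of_hausdorffDist_lt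
    (Set.mem_image_of_mem f hu : f u ∈ (barMap f hf A : Set X)) h
    (hausdorffEdist_ne_top_of_nonempty_of_bounded (barMap f hf A).nonempty B.nonempty
      (barMap f hf A).isCompact.isBounded B.isCompact.isBounded)

lemma ex_bwd {A B : NonemptyCompacts X} {δ : ℝ} (h : dist (barMap f hf A) B < δ)
    {v : X} (hv : v ∈ (B : Set X)) : ∃ u ∈ (A : Set X), dist (f u) v < δ := by
  rw [NonemptyCompacts.dist_eq] at h
  obtain ⟨w, hw, hd⟩ := exists_dist_lt_of_hausdorffDist_lt' hv h
    (hausdorffEdist_ne_top_of_nonempty_of_bounded (barMap f hf A).nonempty B.nonempty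
      (barMap f hf A).isCompact.isBounded B.isCompact.isBounded)
  obtain ⟨u, hu, rfl⟩ := hw
  exact ⟨u, hu, hd⟩

/-- Forward selection of a δ-chain in `X` through a δ-chain of compact sets. -/
lemma fwd_select (C : ℕ → NonemptyCompacts X) {δ : ℝ} :
    ∀ n : ℕ, (∀ j < n, dist (barMap f hf (C j)) (C (j + 1)) < δ) →
    ∀ x0 ∈ (C 0 : Set X), ∃ c : ℕ → X, c 0 = x0 ∧ c n ∈ (C n : Set X) ∧ IsDeltaChain f δ n c := by
  intro n
  induction n with
  | zero => intro _ x0 hx0; exact ⟨fun _ => x0, rfl, hx0, fun j hj => by omega⟩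
  | succ n ih =>
    intro h x0 hx0
    obtain ⟨c, hc0, hcn, hc⟩ := ih (fun j hj => h j (by omega)) x0 hx0
    obtain ⟨v, hv, hdv⟩ := ex_fwd f hf (h n (by omega)) hcn
    refine ⟨fun j => if j ≤ n then c j else v, by simp [hc0], by simp [hv], ?_⟩
    intro j hj
    rcases lt_or_eq_of_le (Nat.lt_succ_iff.1 hj) with h' | h'
    · have h1 : j ≤ n := h'.le
      have h2 : j + 1 ≤ n := h'
      simp only [h1, h2, if_true]
      exact hc j h'
    · subst h'
      simp only [le_refl, if_true]
      rw [if_neg (show ¬ (j + 1 ≤ j) by omega)]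
      exact hdv

/-- Backward selection of a δ-chain in `X` through a δ-chain of compact sets. -/
lemma bwd_select (D : ℕ → NonemptyCompacts X) {δ : ℝ} :
    ∀ m : ℕ, (∀ j < m, dist (barMap f hf (D j)) (D (j + 1)) < δ) →
    ∀ ym ∈ (D m : Set X), ∃ e : ℕ → X, e 0 ∈ (D 0 : Set X) ∧ e m = ym ∧ IsDeltaChain f δ m e := by
  intro m
  induction m with
  | zero => intro _ ym hym; exact ⟨fun _ => ym, hym, rfl, fun j hj => by omega⟩
  | succ m ih =>
    intro h ym hym
    obtain ⟨u, hu, hdu⟩ := ex_bwd f hf (h m (by omega)) hym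
    obtain ⟨e, he0, hem, he⟩ := ih (fun j hj => h j (by omega)) u hu
    refine ⟨fun j => if j ≤ m then e j else ym, by simp [he0], by simp, ?_⟩
    intro j hj
    rcases lt_or_eq_of_le (Nat.lt_succ_iff.1 hj) with h' | h'
    · have h1 : j ≤ m := h'.le
      have h2 : j + 1 ≤ m := h'
      simp only [h1, h2, if_true]
      exact he j h'
    · subst h'
      simp only [le_refl, if_true]
      rw [if_neg (show ¬ (j + 1 ≤ j) by omega), hem]
      exact hdu

lemma prod_of_hyper (hyp : ChainTransitive (barMap f hf)) :
    ∀ N : ℕ, 1 ≤ N → ChainTransitive (prodMap f N) := by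
  intro N hN x y δ hδ
  haveI : Nonempty (Fin N) := Fin.pos_iff_nonempty.1 hN
  set z := x ⟨0, hN⟩ with hz
  set S : NonemptyCompacts X := ⟨⟨{z}, isCompact_singleton⟩, Set.singleton_nonempty z⟩ with hS
  obtain ⟨n, hn1, C, hC0, hCn, hC⟩ := hyp (tupleNC x) S δ hδ
  obtain ⟨m, hm1, D, hD0, hDm, hD⟩ := hyp S (tupleNC y) δ hδ
  have hchain : ∀ i, HasChain f δ (n + m) (x i) (y i) := by
    intro i
    obtain ⟨c, hc0, hcn, hc⟩ := fwd_select f hf C n hC (x i) (by rw [hC0]; exact ⟨i, rfl⟩)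
    obtain ⟨e, he0, hem, he⟩ := bwd_select f hf D m hD (y i) (by rw [hDm]; exact ⟨i, rfl⟩)
    have hcz : c n = z := by rw [hCn] at hcn; exact hcn
    have hez : e 0 = z := by rw [hD0] at he0; exact he0
    exact HasChain.concat ⟨c, hc0, hcz, hc⟩ (by rw [← hez] at hcz ⊢; exact ⟨e, rfl, hem, he⟩)
  obtain ⟨c, h0, hn, hch⟩ := pi_chain f hδ hchain
  exact ⟨n + m, by omega, c, h0, hn, hch⟩

end Hyper
end CWMAux

namespace CWMAux
open Metric Set TopologicalSpace

section Hyper2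
variable {X : Type*} [MetricSpace X] (f : X → X) (hf : Continuous f)

lemma exists_net {K : Set X} (hK : IsCompact K) (hne : K.Nonempty) {η : ℝ} (hη : 0 < η) :
    ∃ n : ℕ, 1 ≤ n ∧ ∃ e : Fin n → X, (∀ i, e i ∈ K) ∧ ∀ z ∈ K, ∃ i, dist z (e i) < η := by
  obtain ⟨t, hts, htf, hcov⟩ := hK.finite_cover_balls hη
  set s : Finset X := htf.toFinset with hs
  have hcov' : ∀ z ∈ K, ∃ y ∈ s, dist z y < η := by
    intro z hz
    have := hcov hz
    rw [Set.mem_iUnion₂] at this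
    obtain ⟨y, hyt, hzy⟩ := this
    exact ⟨y, htf.mem_toFinset.2 hyt, hzy⟩
  have hsne : s.Nonempty := by
    obtain ⟨z, hz⟩ := hne
    obtain ⟨y, hy, _⟩ := hcov' z hz
    exact ⟨y, hy⟩
  refine ⟨s.card, Finset.card_pos.2 hsne, fun i => (s.equivFin.symm i : X), ?_, ?_⟩
  · intro i
    exact hts (htf.mem_toFinset.1 (s.equivFin.symm i).2)
  · intro z hz
    obtain ⟨y, hy, hzy⟩ := hcov' z hz
    refine ⟨s.equivFin ⟨y, hy⟩, ?_⟩
    simpa using hzy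

lemma hyper_of_prod (hprod : ∀ N : ℕ, 1 ≤ N → ChainTransitive (prodMap f N)) :
    ChainTransitive (barMap f hf) := by
  intro K L δ hδ
  -- uniform continuity of f on K
  have huc := K.isCompact.uniformContinuousOn_of_continuous hf.continuousOn
  rw [Metric.uniformContinuousOn_iff] at huc
  obtain ⟨η₀, hη₀, hηc⟩ := huc (δ / 8) (by linarith)
  set η := min η₀ (δ / 8) with hη
  have hηpos : 0 < η := lt_min hη₀ (by linarith)
  -- nets
  obtain ⟨na, hna, ea, hea, heanet⟩ := exists_net K.isCompact K.nonempty hηpos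
  obtain ⟨nb, hnb, eb, heb, hebnet⟩ := exists_net L.isCompact L.nonempty (show (0:ℝ) < δ/8 by linarith)
  set N := max na nb with hNdef
  have hN : 1 ≤ N := le_trans hna (le_max_left _ _)
  haveI : Nonempty (Fin N) := Fin.pos_iff_nonempty.1 hN
  set a : Fin N → X := fun i => ea ⟨i % na, Nat.mod_lt _ (by omega)⟩ with ha
  set b : Fin N → X := fun i => eb ⟨i % nb, Nat.mod_lt _ (by omega)⟩ with hb
  have haK : ∀ i, a i ∈ (K : Set X) := fun i => hea _
  have hbL : ∀ i, b i ∈ (L : Set X) := fun i => heb _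
  have hanet : ∀ z ∈ (K : Set X), ∃ i, dist z (a i) < η := by
    intro z hz
    obtain ⟨i, hi⟩ := heanet z hz
    refine ⟨⟨(i : ℕ), lt_of_lt_of_le i.2 (le_max_left _ _)⟩, ?_⟩
    have : (⟨(i : ℕ) % na, Nat.mod_lt _ (by omega)⟩ : Fin na) = i := by
      ext; simp [Nat.mod_eq_of_lt i.2]
    rw [ha]; simpa [this] using hi
  have hbnet : ∀ z ∈ (L : Set X), ∃ i, dist z (b i) < δ / 8 := by
    intro z hz
    obtain ⟨i, hi⟩ := hebnet z hz
    refine ⟨⟨(i : ℕ), lt_of_lt_of_le i.2 (le_max_right _ _)⟩, ?_⟩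
    have : (⟨(i : ℕ) % nb, Nat.mod_lt _ (by omega)⟩ : Fin nb) = i := by
      ext; simp [Nat.mod_eq_of_lt i.2]
    rw [hb]; simpa [this] using hi
  -- the product chain from a to b
  obtain ⟨n, hn1, cc, hcc0, hccn, hcc⟩ := hprod N hN a b (δ / 8) (by linarith)
  set E : ℕ → NonemptyCompacts X := fun j => tupleNC (cc j) with hE
  -- the three distance bounds
  have F1 : ∀ j < n, dist (barMap f hf (E j)) (E (j + 1)) ≤ δ / 8 := by
    intro j hj
    rw [hE, barMap_tupleNC]
    apply tuple_dist_le (by linarith)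
    intro i
    exact le_of_lt (lt_of_le_of_lt (dist_le_pi_dist (prodMap f N (cc j)) (cc (j+1)) i) (hcc j hj))
  have F2 : dist (barMap f hf K) (barMap f hf (E 0)) ≤ δ / 8 := by
    rw [NonemptyCompacts.dist_eq]
    apply hausdorffDist_le_of_mem_dist (by linarith)
    · rintro w ⟨u, hu, rfl⟩
      obtain ⟨i, hi⟩ := hanet u hu
      refine ⟨f (a i), ⟨a i, ?_, rfl⟩, ?_⟩
      · rw [hE, coe_tupleNC, hcc0]; exact ⟨i, rfl⟩
      · exact le_of_lt (hηc u hu (a i) (haK i) (lt_of_lt_of_le hi (min_le_left _ _)))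
    · rintro w ⟨u, hu, rfl⟩
      rw [hE, coe_tupleNC, hcc0] at hu
      obtain ⟨i, rfl⟩ := hu
      exact ⟨f (a i), Set.mem_image_of_mem f (haK i), by simp; linarith⟩
  have F3 : dist (E n) L ≤ δ / 8 := by
    rw [NonemptyCompacts.dist_eq]
    apply hausdorffDist_le_of_mem_dist (by linarith)
    · rintro w hw
      rw [hE, coe_tupleNC, hccn] at hw
      obtain ⟨i, rfl⟩ := hw
      exact ⟨b i, hbL i, by simp; linarith⟩
    · intro w hw
      obtain ⟨i, hi⟩ := hbnet w hw
      refine ⟨b i, ?_, le_of_lt hi⟩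
      rw [hE, coe_tupleNC, hccn]; exact ⟨i, rfl⟩
  -- the hyperspace chain
  set D : ℕ → NonemptyCompacts X := fun j => if j = 0 then K else if n ≤ j then L else E j with hD
  refine ⟨n, hn1, D, by simp [hD], by simp [hD]; omega, ?_⟩
  intro j hj
  by_cases hj0 : j = 0
  · subst hj0
    have hD0 : D 0 = K := by simp [hD]
    by_cases hn2 : n = 1
    · have hD1 : D (0 + 1) = L := by simp [hD]; omega
      rw [hD0, hD1]
      calc dist (barMap f hf K) L
          ≤ dist (barMap f hf K) (barMap f hf (E 0)) + dist (barMap f hf (E 0)) (E 1)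
            + dist (E 1) L := dist_triangle4 _ _ _ _
        _ ≤ δ / 8 + δ / 8 + δ / 8 := by
            have h1 := F1 0 (by omega)
            have h3 := hn2 ▸ F3
            linarith [F2]
        _ < δ := by linarith
    · have hD1 : D (0 + 1) = E 1 := by simp [hD]; omega
      rw [hD0, hD1]
      calc dist (barMap f hf K) (E 1)
          ≤ dist (barMap f hf K) (barMap f hf (E 0)) + dist (barMap f hf (E 0)) (E 1) :=
            dist_triangle _ _ _
        _ ≤ δ / 8 + δ / 8 := add_le_add F2 (F1 0 (by omega))
        _ < δ := by linarith
  · have hDj : D j = E j := by simp [hD, hj0]; omega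
    by_cases hjn : j + 1 = n
    · have hDj1 : D (j + 1) = L := by simp [hD]; omega
      rw [hDj, hDj1]
      calc dist (barMap f hf (E j)) L
          ≤ dist (barMap f hf (E j)) (E (j + 1)) + dist (E (j + 1)) L := dist_triangle _ _ _
        _ ≤ δ / 8 + δ / 8 := add_le_add (F1 j hj) (by rw [hjn]; exact F3)
        _ < δ := by linarith
    · have hDj1 : D (j + 1) = E (j + 1) := by simp [hD]; omega
      rw [hDj, hDj1]
      exact lt_of_le_of_lt (F1 j hj) (by linarith)

end Hyper2
end CWMAux

/-- `(X,f)` is chain weakly-mixing iff all finite products `(X^N, f_(N))` are chain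
transitive, iff the hyperspace system `(K(X), f̄)` is chain transitive.
(Chain weak mixing: the product `X × X` with the max metric and map `f × f`
is chain transitive.) -/
theorem chainWeaklyMixing_iff_prod_iff_hyperspace {X : Type*} [MetricSpace X]
    (f : X → X) (hf : Continuous f) :
    (ChainTransitive (fun p : X × X => (f p.1, f p.2)) ↔
      ∀ N : ℕ, 1 ≤ N → ChainTransitive (prodMap f N)) ∧
    (ChainTransitive (fun p : X × X => (f p.1, f p.2)) ↔
      ChainTransitive (barMap f hf)) := by
  have hA := CWMAux.prod_of_P2 f
  have hB : (∀ N : ℕ, 1 ≤ N → ChainTransitive (prodMap f N)) →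
      ChainTransitive (fun p : X × X => (f p.1, f p.2)) :=
    fun h => CWMAux.P2_of_prod f (h 2 (by norm_num))
  exact ⟨⟨hA, hB⟩,
    ⟨fun h => CWMAux.hyper_of_prod f hf (hA h),
     fun h => hB (CWMAux.prod_of_hyper f hf h)⟩⟩
end

section
/- Let (X,d) be a metric space and f : X → X a continuous map. The following statements are equivalent: (i) (X,f) is chain mixing; (ii) for every N ≥ 1 the N-fold product system (X^N, f_(N)) is chain mixing; (iii) the hyperspace system (K(X), f̄) is chain mixing. -/
/-- The system `(Y, g)` is chain mixing. -/
def ChainMixing {Y : Type*} [MetricSpace Y] (g : Y → Y) : Prop :=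
  ∀ x y : Y, ∀ δ : ℝ, 0 < δ →
    ∃ n₀ : ℕ, ∀ n ≥ n₀, ∃ c : ℕ → Y, c 0 = x ∧ c n = y ∧ IsDeltaChain g δ n c

open TopologicalSpace Metric Set

lemma prod_of_base {X : Type*} [MetricSpace X] {f : X → X}
    (h : ChainMixing f) (N : ℕ) : ChainMixing (prodMap f N) := by
  intro x y δ hδ
  choose n₀ hn₀ using fun i : Fin N => h (x i) (y i) δ hδ
  refine ⟨Finset.univ.sup n₀, fun n hn => ?_⟩
  have key : ∀ i : Fin N, ∃ c : ℕ → X, c 0 = x i ∧ c n = y i ∧ IsDeltaChain f δ n c :=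
    fun i => hn₀ i n (le_trans (Finset.le_sup (Finset.mem_univ i)) hn)
  choose c h0 hcn hch using key
  refine ⟨fun k i => c i k, funext fun i => h0 i, funext fun i => hcn i, fun j hj => ?_⟩
  rw [dist_pi_lt_iff hδ]
  exact fun i => hch i j hj

lemma base_of_prod {X : Type*} [MetricSpace X] {f : X → X}
    (h : ChainMixing (prodMap f 1)) : ChainMixing f := by
  intro x y δ hδ
  obtain ⟨n₀, hn₀⟩ := h (fun _ => x) (fun _ => y) δ hδ
  refine ⟨n₀, fun n hn => ?_⟩
  obtain ⟨c, h0, hcn, hch⟩ := hn₀ n hn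
  refine ⟨fun k => c k 0, congrFun h0 0, congrFun hcn 0, fun j hj => ?_⟩
  calc dist (f (c j 0)) (c (j+1) 0) ≤ dist (prodMap f 1 (c j)) (c (j+1)) :=
        dist_le_pi_dist (prodMap f 1 (c j)) (c (j+1)) 0
    _ < δ := hch j hj

lemma base_of_hyper {X : Type*} [MetricSpace X] {f : X → X} (hf : Continuous f)
    (h : ChainMixing (barMap f hf)) : ChainMixing f := by
  classical
  intro x y δ hδ
  have sx : NonemptyCompacts X := ⟨⟨{x}, isCompact_singleton⟩, Set.singleton_nonempty x⟩
  obtain ⟨n₀, hn₀⟩ := h ⟨⟨{x}, isCompact_singleton⟩, Set.singleton_nonempty x⟩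
    ⟨⟨{y}, isCompact_singleton⟩, Set.singleton_nonempty y⟩ δ hδ
  refine ⟨n₀, fun n hn => ?_⟩
  obtain ⟨C, h0, hcn, hch⟩ := hn₀ n hn
  -- pick points inside the sets
  have hC0 : (C 0 : Set X) = {x} := by rw [h0]; rfl
  have hCn : (C n : Set X) = {y} := by rw [hcn]; rfl
  have step : ∀ j, j < n → ∀ p ∈ (C j : Set X), ∃ q ∈ (C (j+1) : Set X), dist (f p) q < δ := by
    intro j hj p hp
    have hd : hausdorffDist ((barMap f hf (C j) : Set X)) ((C (j+1)) : Set X) < δ := hch j hj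
    have fin : EMetric.hausdorffEdist ((barMap f hf (C j) : Set X)) ((C (j+1)) : Set X) ≠ ⊤ :=
      hausdorffEdist_ne_top_of_nonempty_of_bounded (barMap f hf (C j)).nonempty
        (C (j+1)).nonempty (barMap f hf (C j)).isCompact.isBounded (C (j+1)).isCompact.isBounded
    exact exists_dist_lt_of_hausdorffDist_lt (Set.mem_image_of_mem f hp) hd fin
  let c : ℕ → X := fun j => Nat.rec x
    (fun j p => if h : ∃ q ∈ (C (j+1) : Set X), dist (f p) q < δ then h.choose else x) j
  have hcsucc : ∀ j, c (j+1) =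
      if h : ∃ q ∈ (C (j+1) : Set X), dist (f (c j)) q < δ then h.choose else x :=
    fun j => rfl
  have hmem : ∀ j, j ≤ n → c j ∈ (C j : Set X) := by
    intro j
    induction j with
    | zero => intro _; rw [hC0]; exact Set.mem_singleton x
    | succ j ih =>
      intro hj
      have hjn : j < n := by omega
      have hex := step j hjn (c j) (ih (by omega))
      rw [hcsucc j, dif_pos hex]
      exact hex.choose_spec.1
  have hchain : IsDeltaChain f δ n c := by
    intro j hj
    have hex := step j hj (c j) (hmem j (by omega))
    rw [hcsucc j, dif_pos hex]
    exact hex.choose_spec.2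
  have hcne : c n = y := by
    have := hmem n le_rfl
    rw [hCn] at this
    exact this
  exact ⟨c, rfl, hcne, hchain⟩

lemma hyper_of_base {X : Type*} [MetricSpace X] {f : X → X} (hf : Continuous f)
    (h : ChainMixing f) : ChainMixing (barMap f hf) := by
  classical
  intro K L δ hδ
  have hδ4 : (0:ℝ) < δ/4 := by linarith
  -- uniform continuity on K
  obtain ⟨ε, hε, hεuc⟩ : ∃ ε > 0, ∀ a ∈ (K : Set X), ∀ b ∈ (K : Set X),
      dist a b < ε → dist (f a) (f b) < δ/4 := by
    have huc := K.isCompact.uniformContinuousOn_of_continuous hf.continuousOn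
    rw [Metric.uniformContinuousOn_iff] at huc
    obtain ⟨ε, hε, hcl⟩ := huc (δ/4) hδ4
    exact ⟨ε, hε, fun a ha b hb hab => hcl a ha b hb hab⟩
  obtain ⟨A, hAK, hAfin, hAcov⟩ := K.isCompact.finite_cover_balls hε
  obtain ⟨B, hBL, hBfin, hBcov⟩ := L.isCompact.finite_cover_balls hδ4
  have hAne : A.Nonempty := by
    obtain ⟨z, hz⟩ := K.nonempty
    obtain ⟨a, ha, -⟩ := Set.mem_iUnion₂.mp (hAcov hz)
    exact ⟨a, ha⟩
  have hBne : B.Nonempty := by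
    obtain ⟨z, hz⟩ := L.nonempty
    obtain ⟨b, hb, -⟩ := Set.mem_iUnion₂.mp (hBcov hz)
    exact ⟨b, hb⟩
  choose n₀ hn₀ using fun a b : X => h a b (δ/4) hδ4
  set M : ℕ := (hAfin.toFinset ×ˢ hBfin.toFinset).sup (fun p => n₀ p.1 p.2) with hM
  refine ⟨M + 2, fun n hn => ?_⟩
  have hn2 : 2 ≤ n := by omega
  have key : ∀ p : X × X, p.1 ∈ A → p.2 ∈ B →
      ∃ c : ℕ → X, c 0 = p.1 ∧ c n = p.2 ∧ IsDeltaChain f (δ/4) n c := by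
    intro p h1 h2
    have hle : n₀ p.1 p.2 ≤ M := Finset.le_sup (f := fun p : X × X => n₀ p.1 p.2)
      (Finset.mem_product.mpr ⟨hAfin.mem_toFinset.mpr h1, hBfin.mem_toFinset.mpr h2⟩)
    exact hn₀ p.1 p.2 n (by omega)
  have : Nonempty X := ⟨K.nonempty.choose⟩
  choose! ch hch0 hchn hchc using key
  -- the intermediate sets
  have hSfin : ∀ k : ℕ, ((fun p : X × X => ch p k) '' (A ×ˢ B)).Finite :=
    fun k => (hAfin.prod hBfin).image _
  have hSne : ∀ k : ℕ, ((fun p : X × X => ch p k) '' (A ×ˢ B)).Nonempty :=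
    fun k => (hAne.prod hBne).image _
  set C : ℕ → NonemptyCompacts X := fun k =>
    if k = 0 then K else if k = n then L
    else ⟨⟨(fun p : X × X => ch p k) '' (A ×ˢ B), (hSfin k).isCompact⟩, hSne k⟩ with hC
  have hCmid : ∀ k, k ≠ 0 → k ≠ n → (C k : Set X) = (fun p : X × X => ch p k) '' (A ×ˢ B) := by
    intro k h1 h2
    show ((if k = 0 then K else if k = n then L
      else ⟨⟨(fun p : X × X => ch p k) '' (A ×ˢ B), (hSfin k).isCompact⟩, hSne k⟩ :
        NonemptyCompacts X) : Set X) = _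
    rw [if_neg h1, if_neg h2]
    rfl
  have hC0' : C 0 = K := by
    show (if (0:ℕ) = 0 then K else _) = K
    rw [if_pos rfl]
  have hCn' : C n = L := by
    show (if n = 0 then K else if n = n then L
      else ⟨⟨(fun p : X × X => ch p n) '' (A ×ˢ B), (hSfin n).isCompact⟩, hSne n⟩) = L
    rw [if_neg (by omega : ¬ n = 0)]
    exact if_pos rfl
  refine ⟨C, hC0', hCn', ?_⟩
  intro j hj
  rw [NonemptyCompacts.dist_eq]
  have hbar : (barMap f hf (C j) : Set X) = f '' (C j : Set X) := rfl
  rw [hbar]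
  have key2 : hausdorffDist (f '' (C j : Set X)) ((C (j+1)) : Set X) ≤ δ/2 := by
    rcases eq_or_ne j 0 with hj0 | hj0
    · -- j = 0 : from K to first mid set
      subst hj0
      have hC0 : (C 0 : Set X) = (K : Set X) := by rw [hC0']
      have hC1 : (C 1 : Set X) = (fun p : X × X => ch p 1) '' (A ×ˢ B) :=
        hCmid 1 one_ne_zero (by omega)
      rw [hC0, hC1]
      refine hausdorffDist_le_of_mem_dist (by linarith) ?_ ?_
      · rintro - ⟨z, hz, rfl⟩
        obtain ⟨a, haA, hza⟩ := Set.mem_iUnion₂.mp (hAcov hz)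
        obtain ⟨b, hbB⟩ := hBne
        refine ⟨ch (a, b) 1, Set.mem_image_of_mem _ (Set.mk_mem_prod haA hbB), ?_⟩
        have h1 : dist (f z) (f a) < δ/4 := hεuc z hz a (hAK haA) (mem_ball.mp hza)
        have h2 : dist (f (ch (a,b) 0)) (ch (a,b) 1) < δ/4 := hchc (a,b) haA hbB 0 (by omega)
        rw [hch0 (a,b) haA hbB] at h2
        calc dist (f z) (ch (a,b) 1) ≤ dist (f z) (f a) + dist (f a) (ch (a,b) 1) :=
              dist_triangle _ _ _
          _ ≤ δ/2 := by linarith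
      · rintro - ⟨p, hp, rfl⟩
        refine ⟨f p.1, Set.mem_image_of_mem f (hAK hp.1), ?_⟩
        have h2 : dist (f (ch p 0)) (ch p 1) < δ/4 := hchc p hp.1 hp.2 0 (by omega)
        rw [hch0 p hp.1 hp.2] at h2
        rw [dist_comm]
        linarith
    · rcases eq_or_ne (j+1) n with hjn | hjn
      · -- j+1 = n : from last mid set to L
        have hCj : (C j : Set X) = (fun p : X × X => ch p j) '' (A ×ˢ B) :=
          hCmid j hj0 (by omega)
        have hCn : (C (j+1) : Set X) = (L : Set X) := by rw [hjn, hCn']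
        rw [hCj, hCn]
        refine hausdorffDist_le_of_mem_dist (by linarith) ?_ ?_
        · rintro - ⟨-, ⟨p, hp, rfl⟩, rfl⟩
          refine ⟨p.2, hBL hp.2, ?_⟩
          have h2 : dist (f (ch p j)) (ch p (j+1)) < δ/4 := hchc p hp.1 hp.2 j hj
          rw [hjn, hchn p hp.1 hp.2] at h2
          linarith
        · intro y hy
          obtain ⟨b, hbB, hyb⟩ := Set.mem_iUnion₂.mp (hBcov hy)
          obtain ⟨a, haA⟩ := hAne
          refine ⟨f (ch (a,b) j), Set.mem_image_of_mem f
            (Set.mem_image_of_mem _ (Set.mk_mem_prod haA hbB)), ?_⟩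
          have h2 : dist (f (ch (a,b) j)) (ch (a,b) (j+1)) < δ/4 := hchc (a,b) haA hbB j hj
          rw [hjn, hchn (a,b) haA hbB] at h2
          have h3 : dist y b < δ/4 := mem_ball.mp hyb
          calc dist y (f (ch (a,b) j)) ≤ dist y b + dist b (f (ch (a,b) j)) :=
                dist_triangle _ _ _
            _ ≤ δ/2 := by rw [dist_comm b (f (ch (a,b) j))]; linarith
      · -- middle case
        have hCj : (C j : Set X) = (fun p : X × X => ch p j) '' (A ×ˢ B) :=
          hCmid j hj0 (by omega)
        have hCj1 : (C (j+1) : Set X) = (fun p : X × X => ch p (j+1)) '' (A ×ˢ B) :=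
          hCmid (j+1) (by omega) hjn
        rw [hCj, hCj1]
        refine hausdorffDist_le_of_mem_dist (by linarith) ?_ ?_
        · rintro - ⟨-, ⟨p, hp, rfl⟩, rfl⟩
          exact ⟨ch p (j+1), Set.mem_image_of_mem _ hp,
            by have := hchc p hp.1 hp.2 j hj; linarith⟩
        · rintro - ⟨p, hp, rfl⟩
          refine ⟨f (ch p j), Set.mem_image_of_mem f (Set.mem_image_of_mem _ hp), ?_⟩
          rw [dist_comm]
          have := hchc p hp.1 hp.2 j hj
          linarith
  linarith [key2]

/-- `(X,f)` is chain mixing iff all finite products `(X^N, f_(N))` are chain mixing,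
iff the hyperspace system `(K(X), f̄)` is chain mixing. -/
theorem chainMixing_iff_prod_iff_hyperspace {X : Type*} [MetricSpace X]
    (f : X → X) (hf : Continuous f) :
    (ChainMixing f ↔ ∀ N : ℕ, 1 ≤ N → ChainMixing (prodMap f N)) ∧
    (ChainMixing f ↔ ChainMixing (barMap f hf)) := by
  constructor
  · exact ⟨fun h N _ => prod_of_base h N, fun h => base_of_prod (h 1 le_rfl)⟩
  · exact ⟨fun h => hyper_of_base hf h, fun h => base_of_hyper hf h⟩
end

section
/- Let (X,d) be a metric space and f : X → X a continuous map. If (X,f) is chain weakly-mixing, then for every N ≥ 1 the N-fold product of the hyperspace system, (K(X)^N, (f̄)_(N)), is chain transitive. -/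
section Aux

open Metric TopologicalSpace Set

variable {X : Type*} [MetricSpace X]

/-- Existence of a δ-chain of given length from `x` to `y`. -/
def HasChain (f : X → X) (δ : ℝ) (x y : X) (n : ℕ) : Prop :=
  ∃ c : ℕ → X, c 0 = x ∧ c n = y ∧ IsDeltaChain f δ n c

theorem HasChain.concat {f : X → X} {δ : ℝ} {x y z : X} {p q : ℕ}
    (h1 : HasChain f δ x z p) (h2 : HasChain f δ z y q) : HasChain f δ x y (p + q) := by
  obtain ⟨c, hc0, hcp, hc⟩ := h1
  obtain ⟨c', hc'0, hc'q, hc'⟩ := h2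
  refine ⟨fun j => if j ≤ p then c j else c' (j - p), by simp [hc0], ?_, ?_⟩
  · rcases Nat.eq_zero_or_pos q with hq | hq
    · subst hq
      simp only [Nat.add_zero]
      by_cases hp0 : p ≤ p
      · simp [hp0, hcp, hc'0.symm, hc'q]
      · omega
    · have hnle : ¬ (p + q ≤ p) := by omega
      simp only [hnle, if_false]
      have : p + q - p = q := by omega
      rw [this, hc'q]
  · intro j hj
    rcases lt_or_ge j p with hjp | hjp
    · have h1' : j ≤ p := hjp.le
      have h2' : j + 1 ≤ p := hjp
      simp only [h1', h2', if_true]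
      exact hc j hjp
    · have h2' : ¬ (j + 1 ≤ p) := by omega
      have hfj : (if j ≤ p then c j else c' (j - p)) = c' (j - p) := by
        by_cases hle : j ≤ p
        · have hje : j = p := le_antisymm hle hjp
          simp [hle, hje, hcp, hc'0]
        · simp [hle]
      simp only [hfj, h2', if_false]
      have hlt : j - p < q := by omega
      have hstep := hc' (j - p) hlt
      have heq : j + 1 - p = (j - p) + 1 := by omega
      rw [heq]
      exact hstep

theorem HasChain.loop_pow {f : X → X} {δ : ℝ} {z : X} {n : ℕ} (h : HasChain f δ z z n) :
    ∀ a : ℕ, HasChain f δ z z (a * n) := by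
  intro a
  induction a with
  | zero => exact ⟨fun _ => z, rfl, rfl, fun j hj => absurd hj (by omega)⟩
  | succ a ih =>
      have := ih.concat h
      rwa [show a * n + n = (a + 1) * n by ring] at this

theorem loop_all_large {f : X → X} {δ : ℝ} {z : X} {n : ℕ} (hn : 1 ≤ n)
    (h1 : HasChain f δ z z n) (h2 : HasChain f δ z z (n + 1)) :
    ∀ m, n * n ≤ m → HasChain f δ z z m := by
  intro m hm
  set q := m / n with hq
  set r := m % n with hr
  have hrn : r < n := Nat.mod_lt _ hn
  have hqr : n * q + r = m := Nat.div_add_mod m n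
  have hqn : n ≤ q := by
    rw [hq, Nat.le_div_iff_mul_le hn]
    nlinarith
  have hrq : r ≤ q := by omega
  have key : (q - r) * n + r * (n + 1) = m := by
    have hmul : r * n ≤ q * n := Nat.mul_le_mul_right _ hrq
    have e1 : (q - r) * n = q * n - r * n := Nat.sub_mul q r n
    have e2 : r * (n + 1) = r * n + r := by ring
    have e3 : q * n = n * q := Nat.mul_comm q n
    omega
  have := (h1.loop_pow (q - r)).concat (h2.loop_pow r)
  rwa [show (q - r) * n + r * (n + 1) = m from key] at this

variable (f : X → X)

/-- Chain transitivity of `f` from chain transitivity of `f × f`. -/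
theorem single_of_pair (h : ChainTransitive (fun p : X × X => (f p.1, f p.2)))
    (x y : X) {δ : ℝ} (hδ : 0 < δ) : ∃ n, 1 ≤ n ∧ HasChain f δ x y n := by
  obtain ⟨n, hn, c, h0, hn', hc⟩ := h (x, x) (y, y) δ hδ
  refine ⟨n, hn, fun j => (c j).1, by simp [h0], by simp [hn'], fun j hj => ?_⟩
  have := hc j hj
  rw [Prod.dist_eq] at this
  exact lt_of_le_of_lt (le_max_left _ _) this

/-- Loops of all sufficiently large lengths at any point. -/
theorem loops_exists (h : ChainTransitive (fun p : X × X => (f p.1, f p.2)))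
    (z : X) {δ : ℝ} (hδ : 0 < δ) :
    ∃ n₀, 1 ≤ n₀ ∧ ∀ m, n₀ ≤ m → HasChain f δ z z m := by
  obtain ⟨n, hn, c, h0, hn', hc⟩ := h (z, f z) (z, z) δ hδ
  have loop1 : HasChain f δ z z n := by
    refine ⟨fun j => (c j).1, by simp [h0], by simp [hn'], fun j hj => ?_⟩
    have := hc j hj
    rw [Prod.dist_eq] at this
    exact lt_of_le_of_lt (le_max_left _ _) this
  have loop2 : HasChain f δ z z (n + 1) := by
    refine ⟨fun j => match j with | 0 => z | (k+1) => (c k).2, rfl, by simp [hn'], ?_⟩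
    intro j hj
    match j with
    | 0 =>
        show dist (f z) (c 0).2 < δ
        rw [h0]
        simpa using hδ
    | (k+1) =>
        show dist (f (c k).2) (c (k+1)).2 < δ
        have := hc k (by omega)
        rw [Prod.dist_eq] at this
        exact lt_of_le_of_lt (le_max_right _ _) this
  refine ⟨n * n, by nlinarith, loop_all_large hn loop1 loop2⟩

/-- Simultaneous δ-chains of a common length for finitely many pairs. -/
theorem simul_chains (h : ChainTransitive (fun p : X × X => (f p.1, f p.2)))
    (z : X) {δ : ℝ} (hδ : 0 < δ) {ι : Type*} [Fintype ι] (a b : ι → X) :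
    ∃ n, 2 ≤ n ∧ ∀ i, HasChain f δ (a i) (b i) n := by
  choose p hp hpc using fun i => single_of_pair f h (a i) z hδ
  choose q hq hqc using fun i => single_of_pair f h z (b i) hδ
  obtain ⟨n₀, hn₀, hloop⟩ := loops_exists f h z hδ
  refine ⟨n₀ + 2 + Finset.univ.sup (fun i => p i + q i), by omega, fun i => ?_⟩
  set S := Finset.univ.sup (fun i => p i + q i) with hS
  have hle : p i + q i ≤ S := Finset.le_sup (f := fun i => p i + q i) (Finset.mem_univ i)
  have hm : n₀ ≤ n₀ + 2 + S - (p i + q i) := by omega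
  have := (hpc i).concat ((hloop _ hm).concat (hqc i))
  rwa [show p i + (n₀ + 2 + S - (p i + q i) + q i) = n₀ + 2 + S by omega] at this

end Aux

/-- If `(X,f)` is chain weakly-mixing, then every finite product of the hyperspace
system, `(K(X)^N, (f̄)_(N))`, is chain transitive. -/
theorem chainweaklymixing_imp_hyperspace_prod_chainTransitive {X : Type*} [MetricSpace X]
    (f : X → X) (hf : Continuous f)
    (h : ChainTransitive (fun p : X × X => (f p.1, f p.2))) :
    ∀ N : ℕ, 1 ≤ N → ChainTransitive (prodMap (barMap f hf) N) := by
  intro N hN K L δ hδ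
  have hδ4 : 0 < δ / 4 := by linarith
  -- uniform continuity of f on each K l
  have hUC : ∀ l : Fin N, ∃ η > 0, ∀ x ∈ (K l : Set X), ∀ y ∈ (K l : Set X),
      dist x y < η → dist (f x) (f y) < δ / 4 := fun l =>
    Metric.uniformContinuousOn_iff.1
      ((K l).isCompact.uniformContinuousOn_of_continuous hf.continuousOn) (δ / 4) hδ4
  choose η hη hηc using hUC
  -- finite nets inside compact sets
  have hnet : ∀ (S : TopologicalSpace.NonemptyCompacts X) (ε : ℝ), 0 < ε →
      ∃ s : Set X, s ⊆ (S : Set X) ∧ s.Finite ∧ s.Nonempty ∧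
        ∀ k ∈ (S : Set X), ∃ a ∈ s, dist k a < ε := by
    intro S ε hε
    obtain ⟨s, hssub, hsfin, hscov⟩ := S.isCompact.elim_finite_subcover_image
      (c := fun a => Metric.ball a ε) (fun a _ => Metric.isOpen_ball)
      (fun k hk => Set.mem_biUnion hk (Metric.mem_ball_self hε))
    have hnear : ∀ k ∈ (S : Set X), ∃ a ∈ s, dist k a < ε := by
      intro k hk
      obtain ⟨a, ha, hka⟩ := Set.mem_iUnion₂.1 (hscov hk)
      exact ⟨a, ha, Metric.mem_ball.1 hka⟩
    obtain ⟨k0, hk0⟩ := S.nonempty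
    obtain ⟨a0, ha0, -⟩ := hnear k0 hk0
    exact ⟨s, hssub, hsfin, ⟨a0, ha0⟩, hnear⟩
  choose A hAsub hAfin hAne hAnet using fun l : Fin N => hnet (K l) (η l) (hη l)
  choose B hBsub hBfin hBne hBnet using fun l : Fin N => hnet (L l) (δ / 4) hδ4
  haveI : ∀ l, Fintype ↥(A l) := fun l => (hAfin l).fintype
  haveI : ∀ l, Fintype ↥(B l) := fun l => (hBfin l).fintype
  haveI : ∀ l, Nonempty ↥(A l) := fun l => (hAne l).to_subtype
  haveI : ∀ l, Nonempty ↥(B l) := fun l => (hBne l).to_subtype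
  set z : X := (K ⟨0, hN⟩).nonempty.some with hz
  obtain ⟨n, hn2, hchains⟩ := simul_chains f h z hδ4
    (ι := (l : Fin N) × (↥(A l) × ↥(B l)))
    (fun i => (i.2.1 : X)) (fun i => (i.2.2 : X))
  choose c hc0 hcn hcchain using hchains
  -- the chain in the hyperspace product
  set D : ℕ → Fin N → TopologicalSpace.NonemptyCompacts X := fun t l =>
    if t = 0 then K l
    else if n ≤ t then L l
    else ⟨⟨Set.range (fun p : ↥(A l) × ↥(B l) => c ⟨l, p⟩ t),
      (Set.finite_range _).isCompact⟩, Set.range_nonempty _⟩ with hD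
  refine ⟨n, by omega, D, ?_, ?_, ?_⟩
  · funext l; simp [hD]
  · funext l; simp [hD, show n ≠ 0 by omega]
  · intro j hj
    rw [dist_pi_lt_iff hδ]
    intro l
    show dist (barMap f hf (D j l)) (D (j + 1) l) < δ
    rw [Metric.NonemptyCompacts.dist_eq]
    have hbar : (barMap f hf (D j l) : Set X) = f '' (D j l : Set X) := rfl
    rw [hbar]
    have hhalf : (0:ℝ) ≤ δ / 2 := by linarith
    have key : Metric.hausdorffDist (f '' (D j l : Set X)) ((D (j+1) l : Set X)) ≤ δ / 2 := by
      apply Metric.hausdorffDist_le_of_mem_dist hhalf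
      · -- forward inclusion
        intro x hx
        obtain ⟨u, hu, rfl⟩ := hx
        rcases eq_or_ne j 0 with hj0 | hj0
        · -- from K l into the first chain stage
          subst hj0
          have hDj : (D 0 l : Set X) = (K l : Set X) := by simp [hD]
          have hu' : u ∈ (K l : Set X) := hDj ▸ hu
          obtain ⟨a, ha, hua⟩ := hAnet l u hu'
          obtain ⟨b, hb⟩ := hBne l
          have hfu : dist (f u) (f a) < δ / 4 :=
            hηc l u hu' a (hAsub l ha) hua
          set i : (l : Fin N) × (↥(A l) × ↥(B l)) := ⟨l, (⟨a, ha⟩, ⟨b, hb⟩)⟩ with hi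
          have hstep : dist (f (c i 0)) (c i 1) < δ / 4 := hcchain i 0 (by omega)
          rw [hc0 i] at hstep
          have hD1 : (D 1 l : Set X) =
              Set.range (fun p : ↥(A l) × ↥(B l) => c ⟨l, p⟩ 1) := by
            simp [hD, show ¬ (n ≤ 1) by omega]
          refine ⟨c i 1, by rw [hD1]; exact ⟨(⟨a, ha⟩, ⟨b, hb⟩), rfl⟩, ?_⟩
          calc dist (f u) (c i 1) ≤ dist (f u) (f a) + dist (f a) (c i 1) := dist_triangle _ _ _
          _ ≤ δ / 4 + δ / 4 := by
              have : dist (f a) (c i 1) < δ / 4 := hstep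
              linarith
          _ = δ / 2 := by ring
        · -- middle or last stage : u is a chain point
          have hDj : (D j l : Set X) =
              Set.range (fun p : ↥(A l) × ↥(B l) => c ⟨l, p⟩ j) := by
            simp [hD, hj0, show ¬ (n ≤ j) by omega]
          rw [hDj] at hu
          obtain ⟨p, rfl⟩ := hu
          have hstep : dist (f (c ⟨l, p⟩ j)) (c ⟨l, p⟩ (j+1)) < δ / 4 :=
            hcchain ⟨l, p⟩ j hj
          rcases eq_or_ne (j + 1) n with hjn | hjn
          · -- last step: c (j+1) = b ∈ B l ⊆ L l
            have hend : c ⟨l, p⟩ (j+1) = (p.2 : X) := by rw [hjn]; exact hcn ⟨l, p⟩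
            have hmem : c ⟨l, p⟩ (j+1) ∈ (L l : Set X) := by
              rw [hend]; exact hBsub l p.2.2
            have hDj1 : (D (j+1) l : Set X) = (L l : Set X) := by
              simp [hD, show j + 1 ≠ 0 by omega, show n ≤ j + 1 by omega]
            exact ⟨c ⟨l, p⟩ (j+1), hDj1 ▸ hmem, by linarith⟩
          · have hDj1 : (D (j+1) l : Set X) =
                Set.range (fun q : ↥(A l) × ↥(B l) => c ⟨l, q⟩ (j+1)) := by
              simp [hD, show j + 1 ≠ 0 by omega, show ¬ (n ≤ j + 1) by omega]
            exact ⟨c ⟨l, p⟩ (j+1), hDj1 ▸ ⟨p, rfl⟩, by linarith⟩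
      · -- backward inclusion
        intro y hy
        rcases eq_or_ne (j + 1) n with hjn | hjn
        · -- target is L l
          have hDj1 : (D (j+1) l : Set X) = (L l : Set X) := by
            simp [hD, show j + 1 ≠ 0 by omega, show n ≤ j + 1 by omega]
          rw [hDj1] at hy
          obtain ⟨b, hb, hyb⟩ := hBnet l y hy
          obtain ⟨a, ha⟩ := hAne l
          set i : (l : Fin N) × (↥(A l) × ↥(B l)) := ⟨l, (⟨a, ha⟩, ⟨b, hb⟩)⟩ with hi
          have hstep : dist (f (c i j)) (c i (j+1)) < δ / 4 := hcchain i j hj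
          have hend : c i (j+1) = b := by rw [hjn]; exact hcn i
          rw [hend] at hstep
          have hj0 : j ≠ 0 := by omega
          have hDj : (D j l : Set X) =
              Set.range (fun p : ↥(A l) × ↥(B l) => c ⟨l, p⟩ j) := by
            simp [hD, hj0, show ¬ (n ≤ j) by omega]
          refine ⟨f (c i j), ⟨c i j, by rw [hDj]; exact ⟨(⟨a, ha⟩, ⟨b, hb⟩), rfl⟩, rfl⟩, ?_⟩
          calc dist y (f (c i j)) = dist (f (c i j)) y := dist_comm _ _
          _ ≤ dist (f (c i j)) b + dist b y := dist_triangle _ _ _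
          _ ≤ δ / 4 + δ / 4 := by rw [dist_comm b y]; linarith
          _ = δ / 2 := by ring
        · -- target is a chain stage
          have hDj1 : (D (j+1) l : Set X) =
              Set.range (fun q : ↥(A l) × ↥(B l) => c ⟨l, q⟩ (j+1)) := by
            simp [hD, show j + 1 ≠ 0 by omega, show ¬ (n ≤ j + 1) by omega]
          rw [hDj1] at hy
          obtain ⟨p, rfl⟩ := hy
          have hstep : dist (f (c ⟨l, p⟩ j)) (c ⟨l, p⟩ (j+1)) < δ / 4 :=
            hcchain ⟨l, p⟩ j hj
          rcases eq_or_ne j 0 with hj0 | hj0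
          · -- source is K l : use that c starts at a ∈ A l ⊆ K l
            subst hj0
            have hDj : (D 0 l : Set X) = (K l : Set X) := by simp [hD]
            have hstart : c ⟨l, p⟩ 0 = (p.1 : X) := hc0 ⟨l, p⟩
            have hmem : c ⟨l, p⟩ 0 ∈ (K l : Set X) := by
              rw [hstart]; exact hAsub l p.1.2
            refine ⟨f (c ⟨l, p⟩ 0), ⟨c ⟨l, p⟩ 0, hDj ▸ hmem, rfl⟩, ?_⟩
            show dist (c ⟨l, p⟩ (0 + 1)) (f (c ⟨l, p⟩ 0)) ≤ δ / 2
            rw [dist_comm]; linarith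
          · have hDj : (D j l : Set X) =
                Set.range (fun q : ↥(A l) × ↥(B l) => c ⟨l, q⟩ j) := by
              simp [hD, hj0, show ¬ (n ≤ j) by omega]
            refine ⟨f (c ⟨l, p⟩ j), ⟨c ⟨l, p⟩ j, hDj ▸ ⟨p, rfl⟩, rfl⟩, ?_⟩
            show dist (c ⟨l, p⟩ (j + 1)) (f (c ⟨l, p⟩ j)) ≤ δ / 2
            rw [dist_comm]; linarith
    calc Metric.hausdorffDist (f '' (D j l : Set X)) ((D (j+1) l : Set X)) ≤ δ / 2 := key
    _ < δ := by linarith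
end

section
/- Let (X,d) be a metric space and f : X → X a continuous map. If (X,f) is chain mixing, then for every N ≥ 1 the N-fold product of the hyperspace system, (K(X)^N, (f̄)_(N)), is chain mixing. -/
open TopologicalSpace Metric Set


lemma barMap_chainMixing {X : Type*} [MetricSpace X]
    (f : X → X) (hf : Continuous f) (h : ChainMixing f) :
    ChainMixing (barMap f hf) := by
  intro K L δ hδ
  have hδ4 : (0:ℝ) < δ/4 := by linarith
  -- uniform continuity of f on K
  obtain ⟨η, hη, hunif⟩ : ∃ η > 0, ∀ x ∈ (K : Set X), ∀ y ∈ (K : Set X),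
      dist x y < η → dist (f x) (f y) < δ/4 := by
    have := (Metric.uniformContinuousOn_iff).1
      (K.isCompact.uniformContinuousOn_of_continuous hf.continuousOn) (δ/4) hδ4
    exact this
  -- finite nets
  obtain ⟨F, hFK, hFfin, hFcov⟩ :=
    totallyBounded_iff_subset.1 K.isCompact.totallyBounded _ (dist_mem_uniformity hη)
  obtain ⟨G, hGL, hGfin, hGcov⟩ :=
    totallyBounded_iff_subset.1 L.isCompact.totallyBounded _ (dist_mem_uniformity hδ4)
  have hFne : F.Nonempty := by
    obtain ⟨x, hx⟩ := K.nonempty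
    obtain ⟨a, ha, -⟩ := mem_iUnion₂.1 (hFcov hx); exact ⟨a, ha⟩
  have hGne : G.Nonempty := by
    obtain ⟨x, hx⟩ := L.nonempty
    obtain ⟨a, ha, -⟩ := mem_iUnion₂.1 (hGcov hx); exact ⟨a, ha⟩
  -- per-pair chain-mixing bounds
  have key : ∀ a b : X, ∃ n₀ : ℕ, ∀ n ≥ n₀,
      ∃ c : ℕ → X, c 0 = a ∧ c n = b ∧ IsDeltaChain f (δ/4) n c := fun a b => h a b _ hδ4
  choose n₀f hn₀f using key
  -- uniform bound over the finite nets
  obtain ⟨M, hM⟩ : ∃ M : ℕ, ∀ a ∈ F, ∀ b ∈ G, n₀f a b ≤ M := by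
    classical
    refine ⟨hFfin.toFinset.sup (fun a => hGfin.toFinset.sup (n₀f a)), fun a ha b hb => ?_⟩
    exact le_trans (Finset.le_sup (hGfin.mem_toFinset.2 hb))
      (Finset.le_sup (f := fun a => hGfin.toFinset.sup (n₀f a)) (hFfin.mem_toFinset.2 ha))
  refine ⟨M + 2, fun n hn => ?_⟩
  have hn2 : 2 ≤ n := le_trans (by omega) hn
  -- choose chains for every pair (total functions via classical)
  have hch : ∀ a b : X, ∃ c : ℕ → X, a ∈ F → b ∈ G →
      c 0 = a ∧ c n = b ∧ IsDeltaChain f (δ/4) n c := by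
    intro a b
    by_cases hab : a ∈ F ∧ b ∈ G
    · obtain ⟨c, hc⟩ := hn₀f a b n (le_trans (hM a hab.1 b hab.2) (by omega))
      exact ⟨c, fun _ _ => hc⟩
    · exact ⟨fun _ => a, fun ha hb => absurd ⟨ha, hb⟩ hab⟩
  choose c hc using hch
  -- intermediate finite sets
  have hSdef : ∀ k : ℕ, ∃ S : NonemptyCompacts X,
      (S : Set X) = (fun p : X × X => c p.1 p.2 k) '' (F ×ˢ G) := by
    intro k
    refine ⟨⟨⟨_, ((hFfin.prod hGfin).image _).isCompact⟩,
      ((hFne.prod hGne).image _)⟩, rfl⟩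
  choose S hS using hSdef
  classical
  set C : ℕ → NonemptyCompacts X :=
    fun k => if k = 0 then K else if k = n then L else S k with hC
  have hCn' : C n = L := by
    show (if n = 0 then K else if n = n then L else S n) = L
    rw [if_neg (by omega : ¬ n = 0), if_pos rfl]
  refine ⟨C, by simp [hC], hCn', ?_⟩
  intro j hj
  have hdist : dist (barMap f hf (C j)) (C (j+1)) = hausdorffDist (f '' (C j : Set X)) (C (j+1) : Set X) :=
    NonemptyCompacts.dist_eq
  rw [hdist]
  have hhalf : (δ:ℝ)/2 < δ := by linarith
  refine lt_of_le_of_lt ?_ hhalf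
  have hmemS : ∀ k, ∀ a ∈ F, ∀ b ∈ G, c a b k ∈ (S k : Set X) := by
    intro k a ha b hb; rw [hS]; exact ⟨(a,b), ⟨ha, hb⟩, rfl⟩
  have hSmem : ∀ k, ∀ x ∈ (S k : Set X), ∃ a ∈ F, ∃ b ∈ G, x = c a b k := by
    intro k x hx; rw [hS] at hx
    obtain ⟨⟨a,b⟩, ⟨ha, hb⟩, rfl⟩ := hx; exact ⟨a, ha, b, hb, rfl⟩
  rcases eq_or_ne j 0 with hj0 | hj0
  · -- first step: f '' K vs S 1  (note n ≥ 2 so 1 ≠ n)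
    subst hj0
    have h1n : (1:ℕ) ≠ n := by omega
    have hC0 : C 0 = K := by simp [hC]
    have hC1 : (C 1 : Set X) = (S 1 : Set X) := by
      show ((if (1:ℕ) = 0 then K else if 1 = n then L else S 1 : NonemptyCompacts X) : Set X) = _
      rw [if_neg (by omega : ¬ (1:ℕ) = 0), if_neg h1n]
    rw [hC0, hC1]
    apply hausdorffDist_le_of_mem_dist (by linarith)
    · rintro x ⟨z, hz, rfl⟩
      obtain ⟨a, ha, hza⟩ := mem_iUnion₂.1 (hFcov hz)
      obtain ⟨b, hb⟩ := hGne
      obtain ⟨h0, hn', hD⟩ := hc a b ha hb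
      refine ⟨c a b 1, hmemS 1 a ha b hb, ?_⟩
      have d1 : dist (f z) (f a) < δ/4 := hunif z hz a (hFK ha) hza
      have d2 : dist (f a) (c a b 1) < δ/4 := by
        have := hD 0 (by omega); rwa [h0] at this
      calc dist (f z) (c a b 1) ≤ dist (f z) (f a) + dist (f a) (c a b 1) := dist_triangle _ _ _
        _ ≤ δ/2 := by linarith
    · intro x hx
      obtain ⟨a, ha, b, hb, rfl⟩ := hSmem 1 x hx
      obtain ⟨h0, hn', hD⟩ := hc a b ha hb
      refine ⟨f a, ⟨a, hFK ha, rfl⟩, ?_⟩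
      have hd := hD 0 (by omega); rw [h0] at hd
      rw [dist_comm]; linarith
  · have hCj : (C j : Set X) = (S j : Set X) := by
      show ((if j = 0 then K else if j = n then L else S j : NonemptyCompacts X) : Set X) = _
      rw [if_neg hj0, if_neg (by omega : ¬ j = n)]
    rcases eq_or_ne (j+1) n with hjn | hjn
    · -- last step: f '' S j vs L
      have hCn : C (j+1) = L := by
        show (if j+1 = 0 then K else if j+1 = n then L else S (j+1)) = L
        rw [if_neg (by omega : ¬ j+1 = 0), if_pos hjn]
      rw [hCj, hCn]
      apply hausdorffDist_le_of_mem_dist (by linarith)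
      · rintro x ⟨z, hz, rfl⟩
        obtain ⟨a, ha, b, hb, rfl⟩ := hSmem j z hz
        obtain ⟨h0, hn', hD⟩ := hc a b ha hb
        refine ⟨b, hGL hb, ?_⟩
        have hd := hD j hj; rw [hjn, hn'] at hd
        linarith
      · intro y hy
        obtain ⟨b, hb, hyb⟩ := mem_iUnion₂.1 (hGcov hy)
        obtain ⟨a, ha⟩ := hFne
        obtain ⟨h0, hn', hD⟩ := hc a b ha hb
        refine ⟨f (c a b j), ⟨c a b j, hmemS j a ha b hb, rfl⟩, ?_⟩
        have h1 := hD j hj; rw [hjn, hn'] at h1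
        have h2 : dist b (f (c a b j)) < δ/4 := by rw [dist_comm]; exact h1
        have h3 : dist y b < δ/4 := hyb
        calc dist y (f (c a b j)) ≤ dist y b + dist b (f (c a b j)) := dist_triangle _ _ _
          _ ≤ δ/2 := by linarith
    · -- middle step: f '' S j vs S (j+1)
      have hCj1 : (C (j+1) : Set X) = (S (j+1) : Set X) := by
        show ((if j+1 = 0 then K else if j+1 = n then L else S (j+1) : NonemptyCompacts X) : Set X) = _
        rw [if_neg (by omega : ¬ j+1 = 0), if_neg hjn]
      rw [hCj, hCj1]
      apply hausdorffDist_le_of_mem_dist (by linarith)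
      · rintro x ⟨z, hz, rfl⟩
        obtain ⟨a, ha, b, hb, rfl⟩ := hSmem j z hz
        obtain ⟨h0, hn', hD⟩ := hc a b ha hb
        exact ⟨c a b (j+1), hmemS (j+1) a ha b hb, by linarith [hD j hj]⟩
      · intro x hx
        obtain ⟨a, ha, b, hb, rfl⟩ := hSmem (j+1) x hx
        obtain ⟨h0, hn', hD⟩ := hc a b ha hb
        refine ⟨f (c a b j), ⟨c a b j, hmemS j a ha b hb, rfl⟩, ?_⟩
        rw [dist_comm]; linarith [hD j hj]

/-- If `(X,f)` is chain mixing, then every finite product of the hyperspace system,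
`(K(X)^N, (f̄)_(N))`, is chain mixing. -/
theorem chainMixing_imp_hyperspace_prod_chainMixing {X : Type*} [MetricSpace X]
    (f : X → X) (hf : Continuous f) (h : ChainMixing f) :
    ∀ N : ℕ, 1 ≤ N → ChainMixing (prodMap (barMap f hf) N) := by
  intro N _ x y δ hδ
  have hB := barMap_chainMixing f hf h
  choose n₀f hn₀f using fun i : Fin N => hB (x i) (y i) δ hδ
  classical
  refine ⟨Finset.univ.sup n₀f, fun n hn => ?_⟩
  choose c hc0 hcn hcD using fun i : Fin N =>
    hn₀f i n (le_trans (Finset.le_sup (Finset.mem_univ i)) hn)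
  refine ⟨fun k i => c i k, funext hc0, funext hcn, fun j hj => ?_⟩
  rw [dist_pi_lt_iff hδ]
  exact fun i => hcD i j hj
end

section
/- Let (X,d) be a metric space and f : X → X a continuous map. Then f has dense range in (X,d) if and only if the induced map f̄ : K(X) → K(X) has dense range in the hyperspace (K(X), d_H). -/
/-- `f` has dense range in `X` iff the induced map `f̄` has dense range in the
hyperspace `K(X)` with the Hausdorff metric. -/
theorem denseRange_iff_hyperspace_denseRange {X : Type*} [MetricSpace X]
    (f : X → X) (hf : Continuous f) :
    DenseRange f ↔ DenseRange (barMap f hf) := by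
  constructor
  · intro hd
    rw [Metric.denseRange_iff]
    intro K ε hε
    -- finite (ε/4)-net of K inside K
    obtain ⟨s, hsK, hsfin, hcov⟩ :=
      Metric.finite_approx_of_totallyBounded K.isCompact.totallyBounded (ε / 4)
        (by linarith)
    -- s is nonempty
    obtain ⟨x0, hx0⟩ := K.nonempty
    have hs_ne : s.Nonempty := by
      rcases Set.mem_iUnion₂.1 (hcov hx0) with ⟨y, hy, _⟩
      exact ⟨y, hy⟩
    -- choose preimages
    have hchoice : ∀ y : X, ∃ t : X, dist y (f t) < ε / 4 := fun y =>
      Metric.denseRange_iff.1 hd y (ε / 4) (by linarith)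
    choose t ht using hchoice
    refine ⟨⟨⟨t '' s, (hsfin.image t).isCompact⟩, hs_ne.image t⟩, ?_⟩
    rw [Metric.NonemptyCompacts.dist_eq]
    have hbound : Metric.hausdorffDist (K : Set X)
        (f '' (t '' s)) ≤ ε / 2 := by
      apply Metric.hausdorffDist_le_of_mem_dist (by linarith)
      · intro x hx
        rcases Set.mem_iUnion₂.1 (hcov hx) with ⟨y, hy, hxy⟩
        refine ⟨f (t y), ⟨t y, ⟨y, hy, rfl⟩, rfl⟩, ?_⟩
        have h1 : dist x y < ε / 4 := Metric.mem_ball.1 hxy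
        have h2 := ht y
        calc dist x (f (t y)) ≤ dist x y + dist y (f (t y)) := dist_triangle _ _ _
          _ ≤ ε / 2 := by linarith
      · rintro z ⟨w, ⟨y, hy, rfl⟩, rfl⟩
        exact ⟨y, hsK hy, by rw [dist_comm]; linarith [ht y]⟩
    calc Metric.hausdorffDist (K : Set X) (f '' (t '' s)) ≤ ε / 2 := hbound
      _ < ε := by linarith
  · intro hd
    rw [Metric.denseRange_iff]
    intro x ε hε
    obtain ⟨L, hL⟩ := Metric.denseRange_iff.1 hd
      ⟨⟨{x}, isCompact_singleton⟩, Set.singleton_nonempty x⟩ ε hε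
    rw [Metric.NonemptyCompacts.dist_eq] at hL
    obtain ⟨y, hy⟩ := L.nonempty
    refine ⟨y, ?_⟩
    have hne : EMetric.hausdorffEdist ({x} : Set X) (f '' (L : Set X)) ≠ ⊤ :=
      Metric.hausdorffEdist_ne_top_of_nonempty_of_bounded (Set.singleton_nonempty x)
        (L.nonempty.image f) isCompact_singleton.isBounded
        (L.isCompact.image hf).isBounded
    have h1 : Metric.infDist (f y) ({x} : Set X) ≤
        Metric.hausdorffDist (f '' (L : Set X)) ({x} : Set X) :=
      Metric.infDist_le_hausdorffDist_of_mem ⟨y, hy, rfl⟩ (by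
        rwa [EMetric.hausdorffEdist_comm])
    rw [Metric.infDist_singleton] at h1
    rw [Metric.hausdorffDist_comm] at h1
    rw [dist_comm]
    exact lt_of_le_of_lt h1 hL
end

section
/- Let (X,d) be a metric space and f : X → X a continuous map. Then (X,f) has the finite shadowing property if and only if the hyperspace system (K(X), f̄) has the finite shadowing property. -/
/-- The system `(Y, g)` has the finite shadowing property. -/
def FiniteShadowing {Y : Type*} [MetricSpace Y] (g : Y → Y) : Prop :=
  ∀ ε : ℝ, 0 < ε → ∃ δ : ℝ, 0 < δ ∧
    ∀ (n : ℕ) (c : ℕ → Y), (∀ j < n, dist (g (c j)) (c (j + 1)) < δ) →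
      ∃ x : Y, ∀ j ≤ n, dist (g^[j] x) (c j) < ε

open Metric TopologicalSpace

lemma barMap_iterate_coe {X : Type*} [MetricSpace X] (f : X → X) (hf : Continuous f)
    (K : NonemptyCompacts X) (i : ℕ) :
    (((barMap f hf)^[i] K : NonemptyCompacts X) : Set X) = f^[i] '' (K : Set X) := by
  induction i with
  | zero => simp
  | succ i ih =>
    rw [Function.iterate_succ_apply']
    show f '' (((barMap f hf)^[i] K : NonemptyCompacts X) : Set X) = _
    rw [ih, ← Set.image_comp, ← Function.iterate_succ']

/-- backward chain construction -/
lemma chain_back {X : Type*} [MetricSpace X] (f : X → X) (δ : ℝ) (n : ℕ) (c : ℕ → Set X)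
    (hbwd : ∀ j < n, ∀ b ∈ c (j + 1), ∃ a ∈ c j, dist (f a) b < δ) :
    ∀ k ≤ n, ∀ a ∈ c k, ∃ x : ℕ → X, x k = a ∧ (∀ j ≤ k, x j ∈ c j) ∧
      ∀ j < k, dist (f (x j)) (x (j + 1)) < δ := by
  intro k
  induction k with
  | zero =>
    intro _ a ha
    refine ⟨fun _ => a, rfl, ?_, by omega⟩
    intro j hj
    have : j = 0 := by omega
    subst this
    exact ha
  | succ k ih =>
    intro hk a ha
    obtain ⟨a', ha', hd⟩ := hbwd k (by omega) a ha
    obtain ⟨x, hxk, hxm, hxc⟩ := ih (by omega) a' ha'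
    refine ⟨Function.update x (k + 1) a, Function.update_self _ _ _, ?_, ?_⟩
    · intro j hj
      rcases Nat.lt_or_ge j (k + 1) with h | h
      · rw [Function.update_of_ne (by omega)]
        exact hxm j (by omega)
      · have : j = k + 1 := by omega
        subst this
        rw [Function.update_self]; exact ha
    · intro j hj
      rcases Nat.lt_or_ge j k with h | h
      · rw [Function.update_of_ne (by omega), Function.update_of_ne (by omega)]
        exact hxc j h
      · have : j = k := by omega
        subst this
        rw [Function.update_of_ne (by omega), Function.update_self, hxk]
        exact hd

/-- forward chain construction -/
lemma chain_fwd {X : Type*} [MetricSpace X] (f : X → X) (δ : ℝ) (n : ℕ) (c : ℕ → Set X)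
    (hfwd : ∀ j < n, ∀ a ∈ c j, ∃ b ∈ c (j + 1), dist (f a) b < δ) :
    ∀ m k, k + m ≤ n → ∀ a ∈ c k, ∃ x : ℕ → X, x k = a ∧
      (∀ j, k ≤ j → j ≤ k + m → x j ∈ c j) ∧
      ∀ j, k ≤ j → j < k + m → dist (f (x j)) (x (j + 1)) < δ := by
  intro m
  induction m with
  | zero =>
    intro k _ a ha
    refine ⟨fun _ => a, rfl, ?_, by omega⟩
    intro j h1 h2
    have : j = k := by omega
    subst this
    exact ha
  | succ m ih =>
    intro k hk a ha
    obtain ⟨x, hxk, hxm, hxc⟩ := ih k (by omega) a ha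
    obtain ⟨b, hb, hd⟩ := hfwd (k + m) (by omega) (x (k + m)) (hxm _ (by omega) (by omega))
    refine ⟨Function.update x (k + m + 1) b, ?_, ?_, ?_⟩
    · rw [Function.update_of_ne (by omega)]; exact hxk
    · intro j h1 h2
      rcases Nat.lt_or_ge j (k + m + 1) with h | h
      · rw [Function.update_of_ne (by omega)]
        exact hxm j h1 (by omega)
      · have : j = k + m + 1 := by omega
        subst this
        rw [Function.update_self]; exact hb
    · intro j h1 h2
      rcases Nat.lt_or_ge j (k + m) with h | h
      · rw [Function.update_of_ne (by omega), Function.update_of_ne (by omega)]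
        exact hxc j h1 h
      · have : j = k + m := by omega
        subst this
        rw [Function.update_of_ne (by omega), Function.update_self]
        exact hd

/-- full chain through a prescribed point -/
lemma chain_full {X : Type*} [MetricSpace X] (f : X → X) (δ : ℝ) (n : ℕ) (c : ℕ → Set X)
    (hfwd : ∀ j < n, ∀ a ∈ c j, ∃ b ∈ c (j + 1), dist (f a) b < δ)
    (hbwd : ∀ j < n, ∀ b ∈ c (j + 1), ∃ a ∈ c j, dist (f a) b < δ) :
    ∀ k ≤ n, ∀ a ∈ c k, ∃ x : ℕ → X, x k = a ∧ (∀ j ≤ n, x j ∈ c j) ∧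
      ∀ j < n, dist (f (x j)) (x (j + 1)) < δ := by
  intro k hk a ha
  obtain ⟨xb, hbk, hbm, hbc⟩ := chain_back f δ n c hbwd k hk a ha
  obtain ⟨xf, hfk, hfm, hfc⟩ := chain_fwd f δ n c hfwd (n - k) k (by omega) a ha
  refine ⟨fun j => if j < k then xb j else xf j, ?_, ?_, ?_⟩
  · simp [hfk]
  · intro j hj
    by_cases h : j < k
    · simpa [h] using hbm j (by omega)
    · simpa [h] using hfm j (by omega) (by omega)
  · intro j hj
    by_cases h : j < k
    · by_cases h' : j + 1 < k
      · simpa [h, h'] using hbc j (by omega)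
      · have hj1 : j + 1 = k := by omega
        simp only [if_pos h, if_neg h']
        have : xf (j + 1) = xb (j + 1) := by rw [hj1, hfk, hbk]
        rw [this]
        exact hbc j (by omega)
    · have h' : ¬ j + 1 < k := by omega
      simpa [h, h'] using hfc j (by omega) (by omega)

/-- `(X,f)` has the finite shadowing property iff the hyperspace system
`(K(X), f̄)` has the finite shadowing property. -/
theorem finiteShadowing_iff_hyperspace {X : Type*} [MetricSpace X]
    (f : X → X) (hf : Continuous f) :
    FiniteShadowing f ↔ FiniteShadowing (barMap f hf) := by
  constructor
  · -- forward direction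
    intro hFS ε hε
    classical
    have hε3 : (0:ℝ) < ε / 3 := by linarith
    obtain ⟨δ, hδ, hshad⟩ := hFS (ε / 3) hε3
    refine ⟨δ, hδ, ?_⟩
    intro n c hc
    -- translate chain condition on sets
    have hne : ∀ j, EMetric.hausdorffEdist (f '' (c j : Set X)) (c (j + 1) : Set X) ≠ ⊤ := by
      intro j
      exact Metric.hausdorffEdist_ne_top_of_nonempty_of_bounded
        ((c j).nonempty.image f) (c (j + 1)).nonempty
        (((c j).isCompact.image hf)).isBounded (c (j + 1)).isCompact.isBounded
    have hcd : ∀ j < n, Metric.hausdorffDist (f '' (c j : Set X)) (c (j + 1) : Set X) < δ := by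
      intro j hj
      have := hc j hj
      rwa [NonemptyCompacts.dist_eq] at this
    have hfwd : ∀ j < n, ∀ a ∈ (c j : Set X), ∃ b ∈ (c (j + 1) : Set X), dist (f a) b < δ := by
      intro j hj a ha
      exact Metric.exists_dist_lt_of_hausdorffDist_lt (Set.mem_image_of_mem f ha)
        (hcd j hj) (hne j)
    have hbwd : ∀ j < n, ∀ b ∈ (c (j + 1) : Set X), ∃ a ∈ (c j : Set X), dist (f a) b < δ := by
      intro j hj b hb
      obtain ⟨y, hy, hyd⟩ := Metric.exists_dist_lt_of_hausdorffDist_lt' hb (hcd j hj) (hne j)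
      obtain ⟨a, ha, rfl⟩ := hy
      exact ⟨a, ha, hyd⟩
    -- for each point of each chain set, a shadowing point
    have hz : ∀ j ≤ n, ∀ a ∈ (c j : Set X), ∃ z : X,
        (∀ i ≤ n, Metric.infDist (f^[i] z) (c i : Set X) < ε / 3) ∧
        dist (f^[j] z) a < ε / 3 := by
      intro j hj a ha
      obtain ⟨x, hxj, hxm, hxc⟩ := chain_full f δ n (fun i => (c i : Set X)) hfwd hbwd j hj a ha
      obtain ⟨z, hzs⟩ := hshad n x hxc
      refine ⟨z, ?_, ?_⟩
      · intro i hi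
        exact lt_of_le_of_lt (Metric.infDist_le_dist_of_mem (hxm i hi)) (hzs i hi)
      · rw [← hxj]; exact hzs j hj
    -- the choice function
    let zfun : ℕ → X → X := fun j a =>
      if h : j ≤ n ∧ a ∈ (c j : Set X) then (hz j h.1 a h.2).choose else a
    have hzfun : ∀ j (hj : j ≤ n) a (ha : a ∈ (c j : Set X)),
        (∀ i ≤ n, Metric.infDist (f^[i] (zfun j a)) (c i : Set X) < ε / 3) ∧
        dist (f^[j] (zfun j a)) a < ε / 3 := by
      intro j hj a ha
      have h : j ≤ n ∧ a ∈ (c j : Set X) := ⟨hj, ha⟩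
      simp only [zfun, dif_pos h]
      exact (hz j h.1 a h.2).choose_spec
    -- finite nets
    have hnet : ∀ j, ∃ F : Set X, F ⊆ (c j : Set X) ∧ F.Finite ∧
        (c j : Set X) ⊆ ⋃ a ∈ F, Metric.ball a (ε / 3) :=
      fun j => (c j).isCompact.finite_cover_balls hε3
    choose F hFsub hFfin hFcov using hnet
    -- the shadowing compact set
    let S : Set X := ⋃ j ∈ Set.Iic n, zfun j '' F j
    have hSfin : S.Finite := (Set.finite_Iic n).biUnion fun j _ => (hFfin j).image _
    have hSne : S.Nonempty := by
      obtain ⟨p, hp⟩ := (c 0).nonempty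
      obtain ⟨a, ha⟩ := Set.mem_iUnion₂.mp (hFcov 0 hp)
      exact ⟨zfun 0 a, Set.mem_biUnion (Set.mem_Iic.mpr (Nat.zero_le n))
        (Set.mem_image_of_mem _ ha.1)⟩
    refine ⟨⟨⟨S, hSfin.isCompact⟩, hSne⟩, ?_⟩
    intro i hi
    rw [NonemptyCompacts.dist_eq, barMap_iterate_coe]
    show Metric.hausdorffDist (f^[i] '' S) (c i : Set X) < ε
    have key : Metric.hausdorffDist (f^[i] '' S) (c i : Set X) ≤ 2 * (ε / 3) := by
      apply Metric.hausdorffDist_le_of_infDist (by linarith)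
      · rintro y ⟨z, hz', rfl⟩
        obtain ⟨j, hj, a, ha, rfl⟩ := by
          simpa only [S, Set.mem_iUnion, Set.mem_image, exists_prop] using hz'
        have := (hzfun j hj a (hFsub j ha)).1 i hi
        linarith
      · intro y hy
        obtain ⟨a, haF, hya⟩ := Set.mem_iUnion₂.mp (hFcov i hy)
        have hd := (hzfun i hi a (hFsub i haF)).2
        have hmem : f^[i] (zfun i a) ∈ f^[i] '' S :=
          Set.mem_image_of_mem _ (Set.mem_biUnion (Set.mem_Iic.mpr hi)
            (Set.mem_image_of_mem _ haF))
        calc Metric.infDist y (f^[i] '' S) ≤ dist y (f^[i] (zfun i a)) :=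
              Metric.infDist_le_dist_of_mem hmem
          _ ≤ dist y a + dist a (f^[i] (zfun i a)) := dist_triangle _ _ _
          _ ≤ 2 * (ε / 3) := by
              rw [Metric.mem_ball] at hya
              rw [dist_comm a]
              linarith
    linarith
  · -- backward direction
    intro hFS ε hε
    obtain ⟨δ, hδ, hshad⟩ := hFS ε hε
    refine ⟨δ, hδ, ?_⟩
    intro n c hc
    -- chain of singletons
    let s : ℕ → NonemptyCompacts X := fun j => ⟨⟨{c j}, isCompact_singleton⟩,
      Set.singleton_nonempty _⟩
    have hs : ∀ j < n, dist (barMap f hf (s j)) (s (j + 1)) < δ := by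
      intro j hj
      rw [NonemptyCompacts.dist_eq]
      have : (barMap f hf (s j) : Set X) = {f (c j)} := by
        show f '' {c j} = {f (c j)}
        simp
      rw [this]
      show Metric.hausdorffDist ({f (c j)} : Set X) ({c (j + 1)} : Set X) < δ
      calc Metric.hausdorffDist ({f (c j)} : Set X) ({c (j + 1)} : Set X)
          ≤ dist (f (c j)) (c (j + 1)) := by
            apply Metric.hausdorffDist_le_of_infDist dist_nonneg
            · intro x hx
              rw [Set.mem_singleton_iff] at hx
              subst hx
              rw [Metric.infDist_singleton]
            · intro x hx
              rw [Set.mem_singleton_iff] at hx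
              subst hx
              rw [Metric.infDist_singleton, dist_comm]
        _ < δ := hc j hj
    obtain ⟨K, hK⟩ := hshad n s hs
    obtain ⟨x, hx⟩ := K.nonempty
    refine ⟨x, ?_⟩
    intro j hj
    have h1 := hK j hj
    rw [NonemptyCompacts.dist_eq, barMap_iterate_coe] at h1
    have hmem : f^[j] x ∈ f^[j] '' (K : Set X) := Set.mem_image_of_mem _ hx
    have hne : EMetric.hausdorffEdist (f^[j] '' (K : Set X)) ({c j} : Set X) ≠ ⊤ :=
      Metric.hausdorffEdist_ne_top_of_nonempty_of_bounded (K.nonempty.image _)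
        (Set.singleton_nonempty _)
        ((K.isCompact.image (hf.iterate j))).isBounded Bornology.isBounded_singleton
    have h2 := Metric.infDist_le_hausdorffDist_of_mem hmem hne
    rw [Metric.infDist_singleton] at h2
    exact lt_of_le_of_lt h2 h1
end

section
/- Let (X,d) be a metric space and f : X → X a continuous map. If (X,f) is contractive, then the hyperspace system (K(X), f̄) has the shadowing property. -/
/-!
The image map `K ↦ f(K)` on nonempty compact sets is Lipschitz with the same constant as `f`
for the Hausdorff distance, so it is again a contraction. A contraction `g` with ratio `λ`
shadows every `ε(1 - λ)`-pseudo-trajectory `(c j)` by its initial point: inductively,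
`d(gʲ⁺¹(c₀), c_{j+1}) ≤ λ d(gʲ(c₀), c_j) + d(g(c_j), c_{j+1}) < λε + ε(1 - λ) = ε`.
-/

open Metric TopologicalSpace NNReal

/-- The system `(Y, g)` has the (full) shadowing property. -/
def ShadowingProperty {Y : Type*} [MetricSpace Y] (g : Y → Y) : Prop :=
  ∀ ε : ℝ, 0 < ε → ∃ δ : ℝ, 0 < δ ∧
    ∀ c : ℕ → Y, (∀ j : ℕ, dist (g (c j)) (c (j + 1)) < δ) →
      ∃ x : Y, ∀ j : ℕ, dist (g^[j] x) (c j) < ε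

section Image

variable {α β : Type*} [PseudoEMetricSpace α] [PseudoEMetricSpace β] {K : ℝ≥0} {f : α → β}

theorem LipschitzWith.infEDist_image_le (hf : LipschitzWith K f) {t : Set α} (ht : IsCompact t)
    (hne : t.Nonempty) (x : α) : infEDist (f x) (f '' t) ≤ K * infEDist x t := by
  obtain ⟨y, hy, hxy⟩ := ht.exists_infEDist_eq_edist hne x
  rw [hxy]
  exact (infEDist_le_edist_of_mem (Set.mem_image_of_mem f hy)).trans (hf x y)

theorem LipschitzWith.hausdorffEDist_image_le (hf : LipschitzWith K f) {s t : Set α}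
    (hs : IsCompact s) (hsne : s.Nonempty) (ht : IsCompact t) (htne : t.Nonempty) :
    hausdorffEDist (f '' s) (f '' t) ≤ K * hausdorffEDist s t := by
  refine hausdorffEDist_le_of_infEDist (Set.forall_mem_image.2 fun x hx => ?_)
    (Set.forall_mem_image.2 fun x hx => ?_)
  · exact (hf.infEDist_image_le ht htne x).trans
      (mul_le_mul_right (infEDist_le_hausdorffEDist_of_mem hx) _)
  · rw [hausdorffEDist_comm]
    exact (hf.infEDist_image_le hs hsne x).trans
      (mul_le_mul_right (infEDist_le_hausdorffEDist_of_mem hx) _)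

end Image

theorem LipschitzWith.barMap {X : Type*} [MetricSpace X] {K : ℝ≥0} {f : X → X}
    (hf : LipschitzWith K f) (hc : Continuous f) : LipschitzWith K (barMap f hc) :=
  fun A B => hf.hausdorffEDist_image_le A.isCompact A.nonempty B.isCompact B.nonempty

theorem ContractingWith.shadowingProperty {Y : Type*} [MetricSpace Y] {K : ℝ≥0} {g : Y → Y}
    (hg : ContractingWith K g) : ShadowingProperty g := by
  intro ε hε
  have hδ : 0 < ε * (1 - K) := mul_pos hε (sub_pos.2 (mod_cast hg.1))
  refine ⟨ε * (1 - K), hδ, fun c hc => ⟨c 0, fun j => ?_⟩⟩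
  induction j with
  | zero => simpa using hε
  | succ j ih =>
    rw [Function.iterate_succ_apply']
    calc dist (g (g^[j] (c 0))) (c (j + 1))
        ≤ dist (g (g^[j] (c 0))) (g (c j)) + dist (g (c j)) (c (j + 1)) := dist_triangle _ _ _
      _ ≤ K * dist (g^[j] (c 0)) (c j) + dist (g (c j)) (c (j + 1)) :=
          add_le_add_left (hg.2.dist_le_mul _ _) _
      _ < K * ε + ε * (1 - K) :=
          add_lt_add_of_le_of_lt (mul_le_mul_of_nonneg_left ih.le K.2) (hc j)
      _ = ε := by ring

/-- If `(X,f)` is contractive, then the hyperspace system `(K(X), f̄)` has the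
shadowing property. -/
theorem contractive_hyperspace_shadowing {X : Type*} [MetricSpace X]
    (f : X → X) (hf : Continuous f)
    (hcontr : ∃ lam : ℝ, 0 ≤ lam ∧ lam < 1 ∧ ∀ x y : X, dist (f x) (f y) ≤ lam * dist x y) :
    ShadowingProperty (barMap f hf) := by
  obtain ⟨lam, hlam0, hlam1, hlip⟩ := hcontr
  have hcontracting : ContractingWith ⟨lam, hlam0⟩ f :=
    ⟨mod_cast hlam1, LipschitzWith.of_dist_le_mul hlip⟩
  exact ContractingWith.shadowingProperty ⟨hcontracting.1, hcontracting.2.barMap hf⟩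
end

section
/- Let (X,d) be a metric space and f : X → X a continuous map. If (X,f) has the finite shadowing property and is chain mixing, then (X,f) is topologically mixing. -/
/-- The system `(Y, g)` is topologically mixing. -/
def TopologicallyMixing {Y : Type*} [MetricSpace Y] (g : Y → Y) : Prop :=
  ∀ U V : Set Y, IsOpen U → IsOpen V → U.Nonempty → V.Nonempty →
    ∃ n₀ : ℕ, ∀ n ≥ n₀, (g^[n] '' U ∩ V).Nonempty

/-- Finite shadowing together with chain mixing implies topological mixing. -/
theorem topologicallyMixing_of_finiteShadowing_chainMixing {X : Type*} [MetricSpace X]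
    (f : X → X) (hf : Continuous f)
    (hsh : FiniteShadowing f) (hcm : ChainMixing f) :
    TopologicallyMixing f := by
  intro U V hU hV ⟨u, hu⟩ ⟨v, hv⟩
  obtain ⟨εU, hεU, hUb⟩ := Metric.isOpen_iff.mp hU u hu
  obtain ⟨εV, hεV, hVb⟩ := Metric.isOpen_iff.mp hV v hv
  set ε := min εU εV with hε
  have hεpos : 0 < ε := lt_min hεU hεV
  obtain ⟨δ, hδ, hδsh⟩ := hsh ε hεpos
  obtain ⟨n₀, hn₀⟩ := hcm u v δ hδ
  refine ⟨n₀, fun n hn => ?_⟩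
  obtain ⟨c, hc0, hcn, hchain⟩ := hn₀ n hn
  obtain ⟨x, hx⟩ := hδsh n c hchain
  have h0 := hx 0 (Nat.zero_le n)
  rw [Function.iterate_zero_apply, hc0] at h0
  have hN := hx n le_rfl
  rw [hcn] at hN
  exact ⟨f^[n] x, ⟨x, hUb (lt_of_lt_of_le h0 (min_le_left _ _)), rfl⟩,
    hVb (lt_of_lt_of_le hN (min_le_right _ _))⟩
end
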